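/- arXiv:1108.0185 — 13 statements merged into one kernel-verified Lean document; each statement's English description precedes it below -/
import Mathlib

section
/- Let X be an n×p real matrix, S a p×p diagonal matrix with nonzero diagonal entries, and Z = X S⁻¹. Let Z'Z = V' Γ V be an eigenvalue decomposition where V is a p×p orthogonal matrix and Γ is diagonal with diagonal entries γ₁ ≥ γ₂ ≥ … ≥ γ_p ≥ 0, let t = #{j : γ_j = γ₁}, let B = diag(γ₁ − γ_{t+1}, …, γ₁ − γ_p), let V₁ be the (p−t)×p submatrix of V consisting of its last p−t rows, and let Δ = B^{1/2} V₁ S. Then X'X + Δ'Δ = γ₁ S²; in particular, the (n + p − t)×p stacked matrix X_c = (X' Δ')' has mutually orthogonal columns. -/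
open Matrix

/-! With `S = diagonal s`, the hypothesis on `Z` gives `XᵀX = S Vᵀ Γ V S`, and `ΔᵀΔ = S Vᵀ (γ₁ I - Γ) V S`
because the rows of `V` left out of `V₁` are exactly those with `γ_l = γ₁`, i.e. of weight
`γ₁ - γ_l = 0`. Adding the two and using `VᵀV = I` gives `γ₁ S²`. -/

theorem Antitone.apply_eq_of_lt_card_filter {α : Type*} [LinearOrder α] {p : ℕ} {γ : Fin p → α}
    (hγ : Antitone γ) (i₀ l : Fin p) (hi₀ : ∀ j, i₀ ≤ j)
    (hl : (l : ℕ) < (Finset.univ.filter (fun j => γ j = γ i₀)).card) : γ l = γ i₀ := by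
  by_contra hne
  have hlt : γ l < γ i₀ := lt_of_le_of_ne (hγ (hi₀ l)) hne
  have hsub : Finset.univ.filter (fun j => γ j = γ i₀) ⊆ Finset.Iio l := by
    intro j hj
    rw [Finset.mem_filter] at hj
    rw [Finset.mem_Iio]
    by_contra hlj
    exact (hγ (not_lt.mp hlj)).not_gt (hj.2 ▸ hlt)
  have := Finset.card_le_card hsub
  rw [Fin.card_Iio] at this
  omega

theorem Fin.sum_eq_sum_tail_of_eq_zero {M : Type*} [AddCommMonoid M] {p : ℕ} (t : ℕ)
    (f : Fin p → M) (hf : ∀ l : Fin p, (l : ℕ) < t → f l = 0) :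
    ∑ l, f l = ∑ i : Fin (p - t), f ⟨t + i, by omega⟩ := by
  refine (Fintype.sum_of_injective (fun i : Fin (p - t) => (⟨t + i, by omega⟩ : Fin p))
    (fun i j h => by simpa [Fin.ext_iff] using h) _ f (fun l hl => hf l ?_) fun _ => rfl).symm
  by_contra! htl
  exact hl ⟨⟨l - t, by omega⟩, by ext; simp; omega⟩

theorem Matrix.transpose_mul_self_submatrix_tail {m R : Type*} [Fintype m] [Semiring R]
    {p : ℕ} (t : ℕ) (M : Matrix (Fin p) m R) (hM : ∀ l : Fin p, (l : ℕ) < t → M l = 0) :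
    (M.submatrix (fun i : Fin (p - t) => ⟨t + i, by omega⟩) id)ᵀ
        * M.submatrix (fun i : Fin (p - t) => ⟨t + i, by omega⟩) id = Mᵀ * M := by
  ext j k
  simp only [mul_apply, transpose_apply, submatrix_apply, id]
  exact (Fin.sum_eq_sum_tail_of_eq_zero t (fun l => M l j * M l k) fun l hl => by
    simp [hM l hl]).symm

theorem Matrix.transpose_mul_self_eq_of_isUnit {m n R : Type*} [Fintype m] [Fintype n] [DecidableEq n]
    [CommRing R] (X : Matrix m n R) {D : Matrix n n R} (hD : IsUnit D.det) :
    Xᵀ * X = Dᵀ * ((X * D⁻¹)ᵀ * (X * D⁻¹)) * D := by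
  conv_lhs => rw [← nonsing_inv_mul_cancel_right D X hD]
  simp only [transpose_mul, Matrix.mul_assoc]

theorem Matrix.transpose_fromRows_mul_self {m₁ m₂ n R : Type*} [Fintype m₁] [Fintype m₂]
    [Semiring R] (A : Matrix m₁ n R) (B : Matrix m₂ n R) :
    (fromRows A B)ᵀ * fromRows A B = Aᵀ * A + Bᵀ * B := by
  rw [transpose_fromRows, fromCols_mul_fromRows]

theorem Matrix.transpose_mul_self_sqrt_diagonal_mul {m : Type*} [Fintype m] [DecidableEq m]
    (d s : m → ℝ) (hd : ∀ l, 0 ≤ d l) (V : Matrix m m ℝ) :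
    (diagonal (fun l => √(d l)) * V * diagonal s)ᵀ * (diagonal (fun l => √(d l)) * V * diagonal s)
      = diagonal s * (Vᵀ * diagonal d * V) * diagonal s := by
  have hsqrt : diagonal (fun l => √(d l)) * diagonal (fun l => √(d l)) = diagonal d := by
    rw [diagonal_mul_diagonal]
    exact congrArg diagonal (funext fun l => Real.mul_self_sqrt (hd l))
  simp only [transpose_mul, diagonal_transpose, ← hsqrt, Matrix.mul_assoc]

/-- Lemma 1, active orthogonalization.
Let `X` be an `n × p` real matrix, `S = diagonal s` a `p × p` diagonal matrix with
nonzero diagonal entries, and `Z = X S⁻¹`.  Let `Zᵀ Z = Vᵀ Γ V` be an eigenvalue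
decomposition with `V` orthogonal and `Γ = diagonal γ`, `γ₁ ≥ ⋯ ≥ γ_p ≥ 0`.
Let `t = #{j : γ j = γ₁}`, and let `Δ = B^{1/2} V₁ S`, i.e.
`Δ i j = √(γ₁ - γ_{t+i}) * V_{t+i, j} * s j` for `i = 0, …, p - t - 1`.
Then `Xᵀ X + Δᵀ Δ = γ₁ S²`; in particular the stacked matrix `X_c = (Xᵀ Δᵀ)ᵀ`
has mutually orthogonal columns. -/
theorem stmt0 {n p t : ℕ} (hp : 0 < p)
    (X : Matrix (Fin n) (Fin p) ℝ) (s : Fin p → ℝ) (hs : ∀ j, s j ≠ 0)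
    (V : Matrix (Fin p) (Fin p) ℝ) (γ : Fin p → ℝ)
    (hV : V ∈ Matrix.orthogonalGroup (Fin p) ℝ)
    (hmono : ∀ i j : Fin p, i ≤ j → γ j ≤ γ i)
    (hZ : (X * (Matrix.diagonal s)⁻¹)ᵀ * (X * (Matrix.diagonal s)⁻¹)
        = Vᵀ * Matrix.diagonal γ * V)
    (ht : t = (Finset.univ.filter (fun j : Fin p => γ j = γ ⟨0, hp⟩)).card)
    (Δ : Matrix (Fin (p - t)) (Fin p) ℝ)
    (hΔ : ∀ (i : Fin (p - t)) (j : Fin p),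
      Δ i j = Real.sqrt (γ ⟨0, hp⟩ - γ ⟨t + i, by have := i.isLt; omega⟩)
        * V ⟨t + i, by have := i.isLt; omega⟩ j * s j) :
    Xᵀ * X + Δᵀ * Δ
      = γ ⟨0, hp⟩ • (Matrix.diagonal s * Matrix.diagonal s) ∧
    ∀ j k : Fin p, j ≠ k →
      (∑ i : Fin n ⊕ Fin (p - t),
        Matrix.fromRows X Δ i j * Matrix.fromRows X Δ i k) = 0 := by
  set γ₀ := γ ⟨0, hp⟩
  set S := diagonal s
  set M := diagonal (fun l => √(γ₀ - γ l)) * V * S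
  have hS : IsUnit S.det := by
    rw [det_diagonal]
    exact isUnit_iff_ne_zero.mpr (Finset.prod_ne_zero_iff.mpr fun j _ => hs j)
  have hXX : Xᵀ * X = S * (Vᵀ * diagonal γ * V) * S := by
    rw [transpose_mul_self_eq_of_isUnit X hS, hZ, diagonal_transpose]
  have hMtail : ∀ l : Fin p, (l : ℕ) < t → M l = 0 := fun l hl => by
    ext j
    have hγl : γ l = γ₀ :=
      Antitone.apply_eq_of_lt_card_filter hmono _ l (fun j => Nat.zero_le j) (ht ▸ hl)
    simp [M, S, mul_diagonal, diagonal_mul, hγl]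
  have hΔΔ : Δᵀ * Δ = S * (Vᵀ * diagonal (fun l => γ₀ - γ l) * V) * S := by
    have hΔM : Δ = M.submatrix (fun i : Fin (p - t) => ⟨t + i, by omega⟩) id := by
      ext i j
      simp [M, S, hΔ, mul_diagonal, diagonal_mul]
    rw [hΔM, transpose_mul_self_submatrix_tail t M hMtail]
    exact transpose_mul_self_sqrt_diagonal_mul _ s (fun l => sub_nonneg.mpr (hmono _ _ (Nat.zero_le l))) V
  have hmain : Xᵀ * X + Δᵀ * Δ = γ₀ • (S * S) := by
    have hsum : diagonal γ + diagonal (fun l => γ₀ - γ l) = γ₀ • 1 := by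
      ext i j
      rcases eq_or_ne i j with rfl | hij
      · simp
      · simp [hij]
    rw [hXX, hΔΔ, ← Matrix.add_mul, ← Matrix.mul_add, ← Matrix.add_mul, ← Matrix.mul_add, hsum,
      Matrix.mul_smul, Matrix.smul_mul, Matrix.mul_one, (mem_orthogonalGroup_iff' _ _).mp hV,
      Matrix.mul_smul, Matrix.smul_mul, Matrix.mul_one]
  refine ⟨hmain, fun j k hjk => ?_⟩
  have hjk' := congrFun₂ (transpose_fromRows_mul_self X Δ) j k
  rw [hmain, Matrix.smul_apply, diagonal_mul_diagonal, diagonal_apply_ne _ hjk, smul_zero] at hjk'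
  simpa [mul_apply] using hjk'
end

section
/- Let ω be an n-dimensional linear subspace of ℝ^m with n ≤ m, and let p ≤ m − n + 1. Then for any p vectors x₁, …, x_p ∈ ω, there exist p vectors x_{c1}, …, x_{cp} ∈ ℝ^m such that the orthogonal projection of x_{ci} onto ω equals x_i for each i = 1, …, p, and x_{ci}' x_{cj} = 0 for all i ≠ j. -/
/-!
Write `x_{ci} = x_i + z_i` with `z_i ∈ ωᗮ`. Then the projection of `x_{ci}` is `x_i` and
`⟪x_{ci}, x_{cj}⟫ = ⟪x_i, x_j⟫ + ⟪z_i, z_j⟫`, so it suffices to find `p` vectors in `ωᗮ`, a space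
of dimension at least `p - 1`, with prescribed off-diagonal Gram entries `-⟪x_i, x_j⟫`.
Given orthonormal `f_0, …, f_{q-1}`, any `q + 1` off-diagonal entries are realised in their span:
take `z_0 = f_0`; the conditions involving `z_0` fix the `f_0`-components of the other vectors,
and what remains is the same problem in the span of `f_1, …, f_{q-1}`.
-/

open Submodule

section

variable {E : Type*} [NormedAddCommGroup E] [InnerProductSpace ℝ E]

theorem Orthonormal.exists_mem_span_inner_eq :
    ∀ {q : ℕ} {f : Fin q → E}, Orthonormal ℝ f → ∀ g : Fin (q + 1) → Fin (q + 1) → ℝ,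
      ∃ z : Fin (q + 1) → E, (∀ i, z i ∈ span ℝ (Set.range f)) ∧
        ∀ i j, i < j → inner ℝ (z i) (z j) = g i j
  | 0, _, _, _ => ⟨0, fun _ => zero_mem _, fun i j hij => absurd hij (by omega)⟩
  | q + 1, f, hf, g => by
    obtain ⟨w, hw_mem, hw⟩ := (hf.comp Fin.succ (Fin.succ_injective _)).exists_mem_span_inner_eq
      fun i j => g i.succ j.succ - g 0 i.succ * g 0 j.succ
    have hspan : span ℝ (Set.range (f ∘ Fin.succ)) ≤ span ℝ (Set.range f) :=
      span_mono (Set.range_comp_subset_range _ _)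
    have hw_orth : ∀ j, inner ℝ (f 0) (w j) = 0 := by
      have : span ℝ (Set.range (f ∘ Fin.succ)) ≤ (ℝ ∙ f 0)ᗮ := by
        rw [span_le]
        rintro _ ⟨k, rfl⟩
        exact mem_orthogonal_singleton_iff_inner_right.2 (hf.inner_eq_zero (Fin.succ_ne_zero k).symm)
      exact fun j => mem_orthogonal_singleton_iff_inner_right.1 (this (hw_mem j))
    have hw_orth' : ∀ j, inner ℝ (w j) (f 0) = 0 := fun j => by rw [real_inner_comm, hw_orth]
    refine ⟨Fin.cons (f 0) fun j => g 0 j.succ • f 0 + w j, ?_, ?_⟩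
    · refine Fin.cases (subset_span ⟨0, rfl⟩) fun j => ?_
      exact add_mem (smul_mem _ _ (subset_span ⟨0, rfl⟩)) (hspan (hw_mem j))
    · refine Fin.cases (Fin.cases (by simp) fun j _ => ?_) fun i => Fin.cases (by simp) fun j hij => ?_
      · simp [inner_add_right, real_inner_smul_right, hw_orth, hf.norm_eq_one]
      · simp only [Fin.cons_succ, inner_add_left, inner_add_right, real_inner_smul_left,
          real_inner_smul_right, hw_orth, hw_orth', real_inner_self_eq_norm_sq, hf.norm_eq_one,
          hw i j (Fin.succ_lt_succ_iff.1 hij)]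
        ring

theorem exists_orthonormal_fin_of_le_finrank [FiniteDimensional ℝ E] {q : ℕ}
    (h : q ≤ Module.finrank ℝ E) : ∃ f : Fin q → E, Orthonormal ℝ f :=
  ⟨fun k => stdOrthonormalBasis ℝ E (Fin.castLE h k),
    (stdOrthonormalBasis ℝ E).orthonormal.comp _ (Fin.castLE_injective h)⟩

theorem Submodule.inner_add_add_of_mem_orthogonal {K : Submodule ℝ E} {x y z w : E}
    (hx : x ∈ K) (hy : y ∈ K) (hz : z ∈ Kᗮ) (hw : w ∈ Kᗮ) :
    inner ℝ (x + z) (y + w) = inner ℝ x y + inner ℝ z w := by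
  rw [inner_add_left, inner_add_right, inner_add_right, inner_right_of_mem_orthogonal hx hw,
    inner_left_of_mem_orthogonal hy hz]
  ring

end

theorem stmt1_general {m n p : ℕ} (ω : Submodule ℝ (EuclideanSpace ℝ (Fin m)))
    (hω : Module.finrank ℝ ω = n) (hp : p ≤ m - n + 1)
    (x : Fin p → EuclideanSpace ℝ (Fin m)) (hx : ∀ i, x i ∈ ω) :
    ∃ xc : Fin p → EuclideanSpace ℝ (Fin m),
      (∀ i, (ω.orthogonalProjection (xc i) : EuclideanSpace ℝ (Fin m)) = x i) ∧
      ∀ i j, i ≠ j → inner ℝ (xc i) (xc j) = (0 : ℝ) := by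
  cases p with
  | zero => exact ⟨Fin.elim0, fun i => i.elim0, fun i => i.elim0⟩
  | succ q =>
    have hdim : q ≤ Module.finrank ℝ ωᗮ := by
      have h := ω.finrank_add_finrank_orthogonal
      rw [hω, finrank_euclideanSpace_fin] at h
      omega
    obtain ⟨f, hf⟩ := exists_orthonormal_fin_of_le_finrank hdim
    obtain ⟨z, -, hz⟩ := hf.exists_mem_span_inner_eq fun i j => -inner ℝ (x i) (x j)
    have horth : ∀ i j, i < j → inner ℝ (x i + z i) (x j + z j) = (0 : ℝ) := fun i j hij => by
      rw [inner_add_add_of_mem_orthogonal (hx i) (hx j) (z i).2 (z j).2, ← coe_inner, hz i j hij,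
        add_neg_cancel]
    refine ⟨fun i => x i + z i, fun i => ?_, fun i j hij => ?_⟩
    · rw [map_add, coe_add, orthogonalProjectionOnto_mem_subspace_eq_self ⟨x i, hx i⟩,
        orthogonalProjectionOnto_apply_of_mem_orthogonal (z i).2, coe_zero, add_zero]
    · rcases hij.lt_or_gt with hij | hij
      · exact horth i j hij
      · rw [real_inner_comm]
        exact horth j i hij

/-- Proposition 1.
Let `ω` be an `n`-dimensional subspace of `ℝ^m` with `n ≤ m`, and let
`p ≤ m - n + 1`.  Then for any `p` vectors `x₁, …, x_p ∈ ω` there exist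
`p` vectors `x_{c1}, …, x_{cp} ∈ ℝ^m` whose orthogonal projections onto `ω`
are `x₁, …, x_p` and which are mutually orthogonal. -/
theorem stmt1 {m n p : ℕ} (ω : Submodule ℝ (EuclideanSpace ℝ (Fin m)))
    (hω : Module.finrank ℝ ω = n) (hnm : n ≤ m) (hp : p ≤ m - n + 1)
    (x : Fin p → EuclideanSpace ℝ (Fin m)) (hx : ∀ i, x i ∈ ω) :
    ∃ xc : Fin p → EuclideanSpace ℝ (Fin m),
      (∀ i, (ω.orthogonalProjection (xc i) : EuclideanSpace ℝ (Fin m)) = x i) ∧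
      ∀ i j, i ≠ j → inner ℝ (xc i) (xc j) = (0 : ℝ) :=
  stmt1_general ω hω hp x hx
end

section
/- If β* ∈ Θ is a local minimum on Θ of the map φ ↦ Q(φ∣β*), then β* is a stationary point of l, i.e., β* ∈ S. -/
/-!
Along the segment `t ↦ β* + t (φ - β*)` the term `‖Δβ* - Δ·‖²` of `Q(· ∣ β*)` equals
`t² ‖Δβ* - Δφ‖²`, so local minimality of `Q(· ∣ β*)` at `β*` gives
`l(β* + t (φ - β*)) - l(β*) ≥ -t² ‖Δβ* - Δφ‖²` for small `t > 0`. The difference quotients of `l`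
are thus bounded below by a function tending to `0`, and their `liminf` is nonnegative.
-/

open Filter Topology Matrix

/-- Matrix–vector multiplication viewed as a map between Euclidean spaces. -/
noncomputable def mulVecE {n p : ℕ} (X : Matrix (Fin n) (Fin p) ℝ)
    (β : EuclideanSpace ℝ (Fin p)) : EuclideanSpace ℝ (Fin n) :=
  (WithLp.equiv 2 (Fin n → ℝ)).symm (X.mulVec ((WithLp.equiv 2 (Fin p → ℝ)) β))

/-- The objective function `l(β) = ‖Y − Xβ‖² + P(β)`. -/
noncomputable def lfun {n p : ℕ} (X : Matrix (Fin n) (Fin p) ℝ)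
    (Y : EuclideanSpace ℝ (Fin n)) (P : EuclideanSpace ℝ (Fin p) → ℝ)
    (β : EuclideanSpace ℝ (Fin p)) : ℝ :=
  ‖Y - mulVecE X β‖ ^ 2 + P β

/-- `Q(β ∣ φ) = ‖Y − Xβ‖² + ‖Δφ − Δβ‖² + P(β)`. -/
noncomputable def Qfun {n m p : ℕ} (X : Matrix (Fin n) (Fin p) ℝ)
    (Y : EuclideanSpace ℝ (Fin n)) (Δ : Matrix (Fin m) (Fin p) ℝ)
    (P : EuclideanSpace ℝ (Fin p) → ℝ)
    (β φ : EuclideanSpace ℝ (Fin p)) : ℝ :=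
  ‖Y - mulVecE X β‖ ^ 2 + ‖mulVecE Δ φ - mulVecE Δ β‖ ^ 2 + P β

/-- `β ∈ Θ` is a stationary point of `l` if
`liminf_{t→0⁺} [l((1−t)β + tφ) − l(β)]/t ≥ 0` for every `φ ∈ Θ`. -/
def IsStationaryPt {p : ℕ} (Θ : Set (EuclideanSpace ℝ (Fin p)))
    (l : EuclideanSpace ℝ (Fin p) → ℝ) (β : EuclideanSpace ℝ (Fin p)) : Prop :=
  β ∈ Θ ∧ ∀ φ ∈ Θ,
    0 ≤ liminf (fun t : ℝ => (l ((1 - t) • β + t • φ) - l β) / t) (𝓝[>] 0)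

theorem liminf_nonneg_of_tendsto_zero_of_eventuallyLE {α : Type*} {f : Filter α} {g u : α → ℝ}
    (hg : Tendsto g f (𝓝 0)) (hgu : g ≤ᶠ[f] u) : 0 ≤ liminf u f := by
  by_cases hu : IsCoboundedUnder (· ≥ ·) f u
  · refine le_of_forall_lt_imp_le_of_dense fun c hc => le_liminf_of_le hu ?_
    filter_upwards [hg.eventually (lt_mem_nhds hc), hgu] with t hct hgt
    exact hct.le.trans hgt
  · -- `liminf` is the `sSup` of an unbounded set here, which is `0` by convention
    exact (Real.sSup_of_not_bddAbove fun ⟨b, hb⟩ => hu ⟨b, fun a ha => hb ha⟩).ge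

theorem tendsto_segment_nhdsWithin_Ioi {E : Type*} [AddCommGroup E] [Module ℝ E]
    [TopologicalSpace E] [ContinuousAdd E] [ContinuousSMul ℝ E] {Θ : Set E}
    (hΘ : Convex ℝ Θ) {x y : E} (hx : x ∈ Θ) (hy : y ∈ Θ) :
    Tendsto (fun t : ℝ => (1 - t) • x + t • y) (𝓝[>] 0) (𝓝[Θ] x) := by
  refine tendsto_nhdsWithin_of_tendsto_nhds_of_eventually_within _ ?_ ?_
  · have hcont : Continuous fun t : ℝ => (1 - t) • x + t • y := by fun_prop
    simpa using hcont.tendsto' 0 x (by simp) |>.mono_left nhdsWithin_le_nhds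
  · filter_upwards [Ioo_mem_nhdsGT zero_lt_one] with t ht
    exact hΘ hx hy (by linarith [ht.2]) ht.1.le (by ring)

theorem norm_sub_map_segment_sq {E F : Type*} [AddCommGroup E] [Module ℝ E]
    [SeminormedAddCommGroup F] [NormedSpace ℝ F] (A : E →ₗ[ℝ] F) (x y : E) (t : ℝ) :
    ‖A x - A ((1 - t) • x + t • y)‖ ^ 2 = t ^ 2 * ‖A x - A y‖ ^ 2 := by
  have hsegment : A x - A ((1 - t) • x + t • y) = t • (A x - A y) := by
    simp only [map_add, map_smul]
    module
  rw [hsegment, norm_smul, mul_pow, Real.norm_eq_abs, sq_abs]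

theorem liminf_slope_nonneg_of_isLocalMinOn_add_sq {E F : Type*} [AddCommGroup E] [Module ℝ E]
    [TopologicalSpace E] [ContinuousAdd E] [ContinuousSMul ℝ E]
    [SeminormedAddCommGroup F] [NormedSpace ℝ F] {Θ : Set E} (hΘ : Convex ℝ Θ)
    (A : E →ₗ[ℝ] F) {f : E → ℝ} {x y : E} (hx : x ∈ Θ) (hy : y ∈ Θ)
    (hmin : IsLocalMinOn (fun z => f z + ‖A x - A z‖ ^ 2) Θ x) :
    0 ≤ liminf (fun t : ℝ => (f ((1 - t) • x + t • y) - f x) / t) (𝓝[>] 0) := by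
  set c := ‖A x - A y‖ ^ 2
  have hlower : ∀ᶠ t : ℝ in 𝓝[>] 0, -(c * t) ≤ (f ((1 - t) • x + t • y) - f x) / t := by
    filter_upwards [(tendsto_segment_nhdsWithin_Ioi hΘ hx hy).eventually hmin,
      self_mem_nhdsWithin] with t hmin_t (ht : 0 < t)
    rw [le_div_iff₀ ht]
    simp only [sub_self, norm_zero, norm_sub_map_segment_sq] at hmin_t
    nlinarith
  have hc : Tendsto (fun t : ℝ => -(c * t)) (𝓝[>] 0) (𝓝 0) := by
    have : Continuous fun t : ℝ => -(c * t) := by fun_prop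
    simpa using this.tendsto 0 |>.mono_left nhdsWithin_le_nhds
  exact liminf_nonneg_of_tendsto_zero_of_eventuallyLE hc hlower

theorem mulVecE_eq_toEuclideanLin {n p : ℕ} (X : Matrix (Fin n) (Fin p) ℝ) :
    mulVecE X = Matrix.toEuclideanLin X :=
  rfl

theorem stmt3_general {n m p : ℕ} (X : Matrix (Fin n) (Fin p) ℝ)
    (Y : EuclideanSpace ℝ (Fin n)) (Δ : Matrix (Fin m) (Fin p) ℝ)
    (Θ : Set (EuclideanSpace ℝ (Fin p))) (P : EuclideanSpace ℝ (Fin p) → ℝ)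
    (hΘconv : Convex ℝ Θ)
    (βstar : EuclideanSpace ℝ (Fin p)) (hβΘ : βstar ∈ Θ)
    (hloc : IsLocalMinOn (fun φ => Qfun X Y Δ P φ βstar) Θ βstar) :
    IsStationaryPt Θ (lfun X Y P) βstar := by
  have hQ : (fun φ => Qfun X Y Δ P φ βstar) = fun φ =>
      lfun X Y P φ + ‖Matrix.toEuclideanLin Δ βstar - Matrix.toEuclideanLin Δ φ‖ ^ 2 := by
    funext φ
    rw [Qfun, lfun, mulVecE_eq_toEuclideanLin Δ]
    ring
  exact ⟨hβΘ, fun φ hφ =>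
    liminf_slope_nonneg_of_isLocalMinOn_add_sq hΘconv _ hβΘ hφ (hQ ▸ hloc)⟩

/-- Theorem 3.
If `β*` is a local minimum on `Θ` of the map `φ ↦ Q(φ ∣ β*)`, then `β*` is a
stationary point of `l`. -/
theorem stmt3 {n m p : ℕ} (X : Matrix (Fin n) (Fin p) ℝ)
    (Y : EuclideanSpace ℝ (Fin n)) (Δ : Matrix (Fin m) (Fin p) ℝ)
    (Θ : Set (EuclideanSpace ℝ (Fin p))) (P : EuclideanSpace ℝ (Fin p) → ℝ)
    (hΘclosed : IsClosed Θ) (hΘconv : Convex ℝ Θ)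
    (hPcont : ContinuousOn P Θ)
    (hPcoer : ∀ C : ℝ, ∃ R : ℝ, ∀ β, R ≤ ‖β‖ → C ≤ P β)
    (βstar : EuclideanSpace ℝ (Fin p)) (hβΘ : βstar ∈ Θ)
    (hloc : IsLocalMinOn (fun φ => Qfun X Y Δ P φ βstar) Θ βstar) :
    IsStationaryPt Θ (lfun X Y P) βstar :=
  stmt3_general X Y Δ Θ P hΘconv βstar hβΘ hloc
end

section
/- Suppose Δ'Δ is positive definite and {β^{(k)}} is a generalized OEM sequence such that l(β^{(k+1)}) < l(β^{(k)}) whenever β^{(k)} ∈ Θ \ S. Then ‖β^{(k+1)} − β^{(k)}‖ → 0 as k → ∞. (Indeed ‖Δβ^{(k+1)} − Δβ^{(k)}‖² ≤ l(β^{(k)}) − l(β^{(k+1)}) for every k, and l(β^{(k)}) converges.) -/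
open Filter Topology Matrix

/-!
Because `Q(β' ∣ β) = l(β') + ‖Δβ − Δβ'‖²` and `Q(β ∣ β) = l(β)`, each OEM step satisfies
`‖Δβ⁽ᵏ⁺¹⁾ − Δβ⁽ᵏ⁾‖² ≤ l(β⁽ᵏ⁾) − l(β⁽ᵏ⁺¹⁾)`. Thus `l(β⁽ᵏ⁾)` decreases; it is bounded below since
a continuous coercive penalty is bounded below on the closed set `Θ`, so it converges and the
increments `Δβ⁽ᵏ⁺¹⁾ − Δβ⁽ᵏ⁾` tend to `0`. Positive definiteness of `ΔᵀΔ` makes `β ↦ Δβ`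
injective, hence anti-Lipschitz in finite dimension, which carries this over to `β⁽ᵏ⁺¹⁾ − β⁽ᵏ⁾`.
-/

theorem Matrix.mulVec_injective_of_posDef_transpose_mul_self {m n : Type*} [Fintype m]
    [Fintype n] [DecidableEq n] {A : Matrix m n ℝ} (hA : (Aᵀ * A).PosDef) :
    Function.Injective A.mulVec := by
  refine Function.Injective.of_comp (f := Aᵀ.mulVec) ?_
  simpa only [Function.comp_def, mulVec_mulVec] using mulVec_injective_of_isUnit hA.isUnit

theorem exists_antilipschitzWith_mulVecE {m p : ℕ} {Δ : Matrix (Fin m) (Fin p) ℝ}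
    (hΔ : (Δᵀ * Δ).PosDef) : ∃ K, AntilipschitzWith K (mulVecE Δ) := by
  have hinj : Function.Injective (Matrix.toEuclideanLin Δ) :=
    (WithLp.equiv 2 _).symm.injective.comp
      ((Matrix.mulVec_injective_of_posDef_transpose_mul_self hΔ).comp (WithLp.equiv 2 _).injective)
  obtain ⟨K, -, hK⟩ := (Matrix.toEuclideanLin Δ).injective_iff_antilipschitz.mp hinj
  exact ⟨K, hK⟩

theorem bddBelow_image_of_continuousOn_of_coercive {E : Type*} [NormedAddCommGroup E]
    [ProperSpace E] {s : Set E} {f : E → ℝ} (hs : IsClosed s) (hf : ContinuousOn f s)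
    (hcoer : ∀ C : ℝ, ∃ R : ℝ, ∀ x, R ≤ ‖x‖ → C ≤ f x) : BddBelow (f '' s) := by
  obtain ⟨R, hR⟩ := hcoer 0
  obtain ⟨B, hB⟩ := ((isCompact_closedBall (0 : E) R).inter_left hs).bddBelow_image
    (hf.mono Set.inter_subset_left)
  refine ⟨min B 0, Set.forall_mem_image.2 fun x hx => ?_⟩
  by_cases hxR : ‖x‖ ≤ R
  · exact (min_le_left _ _).trans (hB ⟨x, ⟨hx, by simpa using hxR⟩, rfl⟩)
  · exact (min_le_right _ _).trans (hR x (not_le.1 hxR).le)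

theorem tendsto_zero_of_sq_le_sub_succ {u d : ℕ → ℝ} {L : ℝ}
    (hu : Tendsto u atTop (𝓝 L)) (hd : ∀ k, d k ^ 2 ≤ u k - u (k + 1)) :
    Tendsto d atTop (𝓝 0) := by
  have hsub : Tendsto (fun k => u k - u (k + 1)) atTop (𝓝 0) := by
    simpa using hu.sub (hu.comp (tendsto_add_atTop_nat 1))
  have hsq : Tendsto (fun k => d k ^ 2) atTop (𝓝 0) :=
    squeeze_zero (fun k => sq_nonneg _) hd hsub
  rw [tendsto_zero_iff_abs_tendsto_zero]
  simpa [Function.comp_def, Real.sqrt_sq_eq_abs] using hsq.sqrt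

theorem sq_norm_mulVecE_sub_le_lfun_sub {n m p : ℕ} {X : Matrix (Fin n) (Fin p) ℝ}
    {Y : EuclideanSpace ℝ (Fin n)} {Δ : Matrix (Fin m) (Fin p) ℝ}
    {P : EuclideanSpace ℝ (Fin p) → ℝ} {β β' : EuclideanSpace ℝ (Fin p)}
    (h : Qfun X Y Δ P β' β ≤ Qfun X Y Δ P β β) :
    ‖mulVecE Δ β' - mulVecE Δ β‖ ^ 2 ≤ lfun X Y P β - lfun X Y P β' := by
  simp only [Qfun, sub_self, norm_zero] at h
  rw [norm_sub_rev, lfun, lfun]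
  linarith

theorem stmt6_general {n m p : ℕ} (X : Matrix (Fin n) (Fin p) ℝ)
    (Y : EuclideanSpace ℝ (Fin n)) (Δ : Matrix (Fin m) (Fin p) ℝ)
    (Θ : Set (EuclideanSpace ℝ (Fin p))) (P : EuclideanSpace ℝ (Fin p) → ℝ)
    (hΘclosed : IsClosed Θ)
    (hPcont : ContinuousOn P Θ)
    (hPcoer : ∀ C : ℝ, ∃ R : ℝ, ∀ β, R ≤ ‖β‖ → C ≤ P β)
    (hposdef : (Δᵀ * Δ).PosDef)
    (βs : ℕ → EuclideanSpace ℝ (Fin p)) (hmem : ∀ k, βs k ∈ Θ)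
    (hQ : ∀ k, Qfun X Y Δ P (βs (k + 1)) (βs k) ≤ Qfun X Y Δ P (βs k) (βs k)) :
    Tendsto (fun k => ‖βs (k + 1) - βs k‖) atTop (𝓝 0) ∧
    (∀ k, ‖mulVecE Δ (βs (k + 1)) - mulVecE Δ (βs k)‖ ^ 2
        ≤ lfun X Y P (βs k) - lfun X Y P (βs (k + 1))) ∧
    ∃ lstar, Tendsto (fun k => lfun X Y P (βs k)) atTop (𝓝 lstar) := by
  set l := fun k => lfun X Y P (βs k)
  have hstep k := sq_norm_mulVecE_sub_le_lfun_sub (hQ k)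
  have hanti : Antitone l :=
    antitone_nat_of_succ_le fun k => sub_nonneg.1 ((sq_nonneg _).trans (hstep k))
  have hbdd : BddBelow (Set.range l) := by
    obtain ⟨B, hB⟩ := bddBelow_image_of_continuousOn_of_coercive hΘclosed hPcont hPcoer
    refine ⟨B, Set.forall_mem_range.2 fun k => ?_⟩
    exact (hB ⟨_, hmem k, rfl⟩).trans (le_add_of_nonneg_left (sq_nonneg _))
  have hl := tendsto_atTop_ciInf hanti hbdd
  have hΔ := tendsto_zero_of_sq_le_sub_succ hl hstep
  obtain ⟨K, hK⟩ := exists_antilipschitzWith_mulVecE hposdef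
  have hKΔ : Tendsto (fun k => K * ‖mulVecE Δ (βs (k + 1)) - mulVecE Δ (βs k)‖) atTop (𝓝 0) := by
    simpa using hΔ.const_mul (K : ℝ)
  refine ⟨squeeze_zero (fun k => norm_nonneg _) (fun k => ?_) hKΔ, hstep, _, hl⟩
  simpa only [← dist_eq_norm] using hK.le_mul_dist (βs (k + 1)) (βs k)

/-- If `ΔᵀΔ` is positive definite and `{β⁽ᵏ⁾}` is a generalized OEM sequence with
the strict-descent property, then `‖β⁽ᵏ⁺¹⁾ − β⁽ᵏ⁾‖ → 0`; indeed
`‖Δβ⁽ᵏ⁺¹⁾ − Δβ⁽ᵏ⁾‖² ≤ l(β⁽ᵏ⁾) − l(β⁽ᵏ⁺¹⁾)` for every `k`, and `l(β⁽ᵏ⁾)`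
converges. -/
theorem stmt6 {n m p : ℕ} (X : Matrix (Fin n) (Fin p) ℝ)
    (Y : EuclideanSpace ℝ (Fin n)) (Δ : Matrix (Fin m) (Fin p) ℝ)
    (Θ : Set (EuclideanSpace ℝ (Fin p))) (P : EuclideanSpace ℝ (Fin p) → ℝ)
    (hΘclosed : IsClosed Θ) (hΘconv : Convex ℝ Θ)
    (hPcont : ContinuousOn P Θ)
    (hPcoer : ∀ C : ℝ, ∃ R : ℝ, ∀ β, R ≤ ‖β‖ → C ≤ P β)
    (hposdef : (Δᵀ * Δ).PosDef)
    (βs : ℕ → EuclideanSpace ℝ (Fin p)) (hmem : ∀ k, βs k ∈ Θ)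
    (hQ : ∀ k, Qfun X Y Δ P (βs (k + 1)) (βs k) ≤ Qfun X Y Δ P (βs k) (βs k))
    (hdesc : ∀ k, ¬ IsStationaryPt Θ (lfun X Y P) (βs k) →
      lfun X Y P (βs (k + 1)) < lfun X Y P (βs k)) :
    Tendsto (fun k => ‖βs (k + 1) - βs k‖) atTop (𝓝 0) ∧
    (∀ k, ‖mulVecE Δ (βs (k + 1)) - mulVecE Δ (βs k)‖ ^ 2
        ≤ lfun X Y P (βs k) - lfun X Y P (βs (k + 1))) ∧
    ∃ lstar, Tendsto (fun k => lfun X Y P (βs k)) atTop (𝓝 lstar) :=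
  stmt6_general X Y Δ Θ P hΘclosed hPcont hPcoer hposdef βs hmem hQ
end

section
/- Suppose X'X + Δ'Δ = d·I_p with d ≥ γ₁, where γ₁ ≥ … ≥ γ_p ≥ 0 are the eigenvalues of X'X. Let λ₁ ≥ 0, λ₂ ≥ 0, let A = Δ'Δ = d·I_p − X'X with columns a₁, …, a_p, let x_j denote the j-th column of X, and define the elastic-net OEM iteration map M : ℝ^p → ℝ^p componentwise by M_j(β) = f(x_j'Y + a_j'β), where f(u) = sign(u)·((|u| − λ₁)₊/(d + λ₂)). Then for all β, φ ∈ ℝ^p, ‖M(β) − M(φ)‖ ≤ ((d − γ_p)/d)·‖β − φ‖. In particular, the global rate of convergence of the OEM sequence for the elastic-net (and for the lasso, the case λ₂ = 0) is at most R₀ = (d − γ_p)/d, the rate for the ordinary least squares OEM iteration. -/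
open Filter Topology Matrix

/-!
Soft thresholding `u ↦ sign u · (|u| - λ)₊` is `1`-Lipschitz, so coordinatewise
`|M_j β - M_j φ| ≤ |(A (β - φ))_j| / (d + λ₂)` for the symmetric matrix `A = ΔᵀΔ`.
Since `A = d·I - XᵀX = Vᵀ diag(d - γ_j) V` with `0 ≤ d - γ_j ≤ d - γ_p`, the operator norm of `A`
is at most `d - γ_p`, and `d + λ₂ ≥ d`.
-/

noncomputable def softThreshold (lam u : ℝ) : ℝ := Real.sign u * max (|u| - lam) 0

theorem softThreshold_of_nonneg {lam u : ℝ} (hl : 0 ≤ lam) (hu : 0 ≤ u) :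
    softThreshold lam u = max (u - lam) 0 := by
  rcases hu.eq_or_lt with rfl | hu
  · simp [softThreshold, hl]
  · rw [softThreshold, Real.sign_of_pos hu, abs_of_pos hu, one_mul]

theorem softThreshold_of_nonpos {lam u : ℝ} (hl : 0 ≤ lam) (hu : u ≤ 0) :
    softThreshold lam u = min (u + lam) 0 := by
  rcases hu.eq_or_lt with rfl | hu
  · simp [softThreshold, hl]
  · rw [softThreshold, Real.sign_of_neg hu, abs_of_neg hu, neg_one_mul, ← neg_zero, ← neg_add',
      max_neg_neg, neg_neg, neg_zero]

theorem abs_softThreshold_sub_le {lam : ℝ} (hl : 0 ≤ lam) (u v : ℝ) :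
    |softThreshold lam u - softThreshold lam v| ≤ |u - v| := by
  rcases le_total 0 u with hu | hu <;> rcases le_total 0 v with hv | hv <;>
    simp only [softThreshold_of_nonneg, softThreshold_of_nonpos, hl, hu, hv] <;>
    rw [abs_sub_le_iff] <;> constructor <;> cases abs_cases (u - v) <;>
    simp only [max_def, min_def] <;> split_ifs <;> linarith

theorem abs_softThreshold_add_div_sub_le {lam D : ℝ} (hl : 0 ≤ lam) (hD : 0 ≤ D) (b u v : ℝ) :
    |softThreshold lam (b + u) / D - softThreshold lam (b + v) / D| ≤ D⁻¹ * |u - v| := by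
  rw [← sub_div, abs_div, abs_of_nonneg hD, inv_mul_eq_div, ← add_sub_add_left_eq_sub u v b]
  exact div_le_div_of_nonneg_right (abs_softThreshold_sub_le hl _ _) hD

theorem EuclideanSpace.norm_le_mul_norm_of_abs_le {ι : Type*} [Fintype ι]
    {x y : EuclideanSpace ℝ ι} {K : ℝ} (hK : 0 ≤ K) (h : ∀ i, |x i| ≤ K * |y i|) :
    ‖x‖ ≤ K * ‖y‖ := by
  have : ‖x‖ ≤ ‖K • y‖ := by
    rw [EuclideanSpace.norm_eq, EuclideanSpace.norm_eq]
    gcongr with i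
    simpa [abs_mul, abs_of_nonneg hK] using h i
  rwa [norm_smul, Real.norm_of_nonneg hK] at this

theorem Matrix.IsSymm.sum_apply_mul_eq_mulVec {ι α : Type*} [Fintype ι]
    [NonUnitalNonAssocSemiring α] {A : Matrix ι ι α} (hA : A.IsSymm) (x : ι → α) (j : ι) :
    ∑ i, A i j * x i = (A *ᵥ x) j :=
  Finset.sum_congr rfl fun i _ => congrArg (· * x i) (hA.apply i j).symm

section Spectral

variable {ι : Type*} [Fintype ι] [DecidableEq ι]

theorem norm_toLp_mulVec_of_mem_orthogonalGroup {V : Matrix ι ι ℝ}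
    (hV : V ∈ orthogonalGroup ι ℝ) (x : ι → ℝ) :
    ‖WithLp.toLp 2 (V *ᵥ x)‖ = ‖WithLp.toLp 2 x‖ := by
  have hVV : Vᵀ * V = 1 := by simpa using (mem_orthogonalGroup_iff' ι ℝ).mp hV
  rw [← sq_eq_sq₀ (norm_nonneg _) (norm_nonneg _), ← real_inner_self_eq_norm_sq,
    ← real_inner_self_eq_norm_sq, EuclideanSpace.inner_eq_star_dotProduct,
    EuclideanSpace.inner_eq_star_dotProduct]
  simp only [star_trivial]
  rw [dotProduct_mulVec, ← mulVec_transpose, mulVec_mulVec, hVV, one_mulVec]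

theorem norm_toLp_diagonal_mulVec_le {c : ι → ℝ} {K : ℝ} (hK : 0 ≤ K) (hc : ∀ i, |c i| ≤ K)
    (x : ι → ℝ) : ‖WithLp.toLp 2 (diagonal c *ᵥ x)‖ ≤ K * ‖WithLp.toLp 2 x‖ :=
  EuclideanSpace.norm_le_mul_norm_of_abs_le hK fun i => by
    simpa [mulVec_diagonal, abs_mul] using mul_le_mul_of_nonneg_right (hc i) (abs_nonneg (x i))

theorem norm_toLp_conj_diagonal_mulVec_le {V : Matrix ι ι ℝ} (hV : V ∈ orthogonalGroup ι ℝ)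
    {c : ι → ℝ} {K : ℝ} (hK : 0 ≤ K) (hc : ∀ i, |c i| ≤ K) (x : ι → ℝ) :
    ‖WithLp.toLp 2 ((Vᵀ * diagonal c * V) *ᵥ x)‖ ≤ K * ‖WithLp.toLp 2 x‖ := by
  have hVt : Vᵀ ∈ orthogonalGroup ι ℝ := transpose_mem_unitaryGroup_iff.mpr hV
  rw [← mulVec_mulVec, ← mulVec_mulVec, norm_toLp_mulVec_of_mem_orthogonalGroup hVt,
    ← norm_toLp_mulVec_of_mem_orthogonalGroup hV x]
  exact norm_toLp_diagonal_mulVec_le hK hc _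

theorem smul_one_sub_conj_diagonal {R : Type*} [CommRing R] {V : Matrix ι ι R}
    (hVV : Vᵀ * V = 1) (d : R) (γ : ι → R) :
    d • 1 - Vᵀ * diagonal γ * V = Vᵀ * diagonal (fun j => d - γ j) * V := by
  rw [← diagonal_sub, ← smul_one_eq_diagonal, mul_sub, sub_mul, Matrix.mul_smul, mul_one,
    Matrix.smul_mul, hVV]

end Spectral

theorem div_add_le_div_of_le {a d lam : ℝ} (ha : 0 ≤ a) (had : a ≤ d) (hl : 0 ≤ lam) :
    a / (d + lam) ≤ a / d := by
  rcases (ha.trans had).eq_or_lt with rfl | hd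
  · simp [le_antisymm had ha]
  · exact div_le_div_of_nonneg_left ha hd (le_add_of_nonneg_right hl)

/-- Theorem 6, convergence rate for the elastic-net.
Suppose `XᵀX + ΔᵀΔ = d·I_p` with `d ≥ γ₁`, where `γ₁ ≥ … ≥ γ_p ≥ 0` are the
eigenvalues of `XᵀX` (given via an eigendecomposition `XᵀX = Vᵀ Γ V`).
Let `A = ΔᵀΔ = d·I_p − XᵀX` and define the elastic-net OEM map `M`
componentwise by `M_j(β) = f(x_jᵀY + a_jᵀβ)` with
`f(u) = sign(u)·(|u| − λ₁)₊/(d + λ₂)`.  Then `M` is Lipschitz with constant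
`(d − γ_p)/d`, the rate `R₀` of the ordinary least squares OEM iteration. -/
theorem stmt7 {n m p : ℕ} (hp : 0 < p)
    (X : Matrix (Fin n) (Fin p) ℝ) (Y : Fin n → ℝ) (Δ : Matrix (Fin m) (Fin p) ℝ)
    (d lam1 lam2 : ℝ) (hl1 : 0 ≤ lam1) (hl2 : 0 ≤ lam2)
    (V : Matrix (Fin p) (Fin p) ℝ) (γ : Fin p → ℝ)
    (hV : V ∈ Matrix.orthogonalGroup (Fin p) ℝ)
    (hmono : ∀ i j : Fin p, i ≤ j → γ j ≤ γ i) (hγ : ∀ j, 0 ≤ γ j)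
    (hdecomp : Xᵀ * X = Vᵀ * Matrix.diagonal γ * V)
    (hd : γ ⟨0, hp⟩ ≤ d)
    (hXΔ : Xᵀ * X + Δᵀ * Δ = d • (1 : Matrix (Fin p) (Fin p) ℝ))
    (M : EuclideanSpace ℝ (Fin p) → EuclideanSpace ℝ (Fin p))
    (hM : ∀ (β : EuclideanSpace ℝ (Fin p)) (j : Fin p),
      M β j = Real.sign (∑ i, X i j * Y i + ∑ i, (Δᵀ * Δ) i j * β i) *
        (max (|∑ i, X i j * Y i + ∑ i, (Δᵀ * Δ) i j * β i| - lam1) 0 / (d + lam2))) :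
    ∀ β φ : EuclideanSpace ℝ (Fin p),
      ‖M β - M φ‖ ≤ ((d - γ ⟨p - 1, by omega⟩) / d) * ‖β - φ‖ := by
  intro β φ
  set γp := γ ⟨p - 1, by omega⟩
  set A := Δᵀ * Δ with hAdef
  have hsymm : A.IsSymm := by rw [IsSymm, hAdef, transpose_mul, transpose_transpose]
  have hVV : Vᵀ * V = 1 := by simpa using (mem_orthogonalGroup_iff' (Fin p) ℝ).mp hV
  have hA : A = Vᵀ * diagonal (fun j => d - γ j) * V := by
    rw [← smul_one_sub_conj_diagonal hVV, ← hdecomp, ← hXΔ, add_sub_cancel_left]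
  have hγmin : ∀ j, |d - γ j| ≤ d - γp := fun j => by
    rw [abs_of_nonneg (by linarith [hmono ⟨0, hp⟩ j (Fin.le_def.mpr (Nat.zero_le _))])]
    linarith [hmono j ⟨p - 1, by omega⟩ (Fin.le_def.mpr (Nat.le_sub_one_of_lt j.isLt))]
  have hK : 0 ≤ d - γp := (abs_nonneg _).trans (hγmin ⟨0, hp⟩)
  have hdl : 0 ≤ d + lam2 := by linarith [hγ ⟨0, hp⟩]
  have hMA : ∀ x j, M x j =
      softThreshold lam1 (∑ i, X i j * Y i + (A *ᵥ x.ofLp) j) / (d + lam2) := fun x j => by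
    rw [hM, hsymm.sum_apply_mul_eq_mulVec, softThreshold, mul_div_assoc]
  have hcomp : ∀ j, |(M β - M φ) j| ≤ (d + lam2)⁻¹ * |(A *ᵥ (β - φ).ofLp) j| := fun j => by
    rw [PiLp.sub_apply, hMA, hMA, WithLp.ofLp_sub, mulVec_sub, Pi.sub_apply]
    exact abs_softThreshold_add_div_sub_le hl1 hdl _ _ _
  calc ‖M β - M φ‖ ≤ (d + lam2)⁻¹ * ‖WithLp.toLp 2 (A *ᵥ (β - φ).ofLp)‖ :=
        EuclideanSpace.norm_le_mul_norm_of_abs_le (inv_nonneg.mpr hdl) hcomp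
    _ ≤ (d + lam2)⁻¹ * ((d - γp) * ‖β - φ‖) := by
        gcongr
        rw [hA]
        exact norm_toLp_conj_diagonal_mulVec_le hV hK hγmin _
    _ = (d - γp) / (d + lam2) * ‖β - φ‖ := by ring
    _ ≤ (d - γp) / d * ‖β - φ‖ :=
        mul_le_mul_of_nonneg_right (div_add_le_div_of_le hK (sub_le_self d (hγ _)) hl2)
          (norm_nonneg _)
end

section
/- Suppose X'X + Δ'Δ = d·I_p with d > 0. Fix λ ≥ 0 and β ∈ ℝ^p, let u = X'Y + (d·I_p − X'X)β, and define the lasso OEM update β⁺ ∈ ℝ^p by β⁺_j = sign(u_j)·((|u_j| − λ)₊/d). Let e ∈ ℝ^p be a vector all of whose entries are zero except for two entries i ≠ j, with e_i = 1 and e_j ∈ {1, −1}. If Xe = 0 and e'β = 0, then e'β⁺ = 0. -/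
/-! Since `Xe = 0`, the contrast `e` kills both `XᵀY` and `XᵀXβ`, so `eᵀu = d·eᵀβ = 0`,
i.e. `u_i = ∓u_j`. The soft-thresholding map `x ↦ sign x · (|x| - λ)₊ / d` is odd, so `β⁺`
inherits the same relation. -/

open Matrix

section

variable {R ι κ : Type*} [CommRing R] [Fintype ι] [Fintype κ]

lemma dotProduct_transpose_mulVec_of_mulVec_eq_zero {X : Matrix ι κ R} {e : κ → R}
    (hXe : X *ᵥ e = 0) (v : ι → R) : e ⬝ᵥ (Xᵀ *ᵥ v) = 0 := by
  rw [dotProduct_mulVec, vecMul_transpose, hXe, zero_dotProduct]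

lemma dotProduct_transpose_mulVec_add_smul_one_sub_mulVec [DecidableEq κ] {X : Matrix ι κ R}
    {e : κ → R} (hXe : X *ᵥ e = 0) (Y : ι → R) (d : R) (β : κ → R) :
    e ⬝ᵥ (Xᵀ *ᵥ Y + (d • (1 : Matrix κ κ R) - Xᵀ * X) *ᵥ β) = d * (e ⬝ᵥ β) := by
  rw [sub_mulVec, smul_mulVec, one_mulVec, ← mulVec_mulVec, dotProduct_add,
    dotProduct_sub, dotProduct_smul, dotProduct_transpose_mulVec_of_mulVec_eq_zero hXe,
    dotProduct_transpose_mulVec_of_mulVec_eq_zero hXe, smul_eq_mul]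
  ring

end

lemma odd_sign_mul_comp_abs (g : ℝ → ℝ) : Function.Odd fun x => Real.sign x * g |x| := by
  intro x
  simp only [Real.sign_neg, abs_neg, neg_mul]

lemma Function.Odd.add_mul_eq_zero {R : Type*} [CommRing R] {f : R → R} (hf : f.Odd)
    {s a b : R} (hs : s = 1 ∨ s = -1) (h : a + s * b = 0) : f a + s * f b = 0 := by
  rcases hs with rfl | rfl
  · rw [show a = -b by linear_combination h, hf]
    ring
  · rw [show a = b by linear_combination h]
    ring

theorem stmt9_general {n p : ℕ} (X : Matrix (Fin n) (Fin p) ℝ) (Y : Fin n → ℝ)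
    (d lam : ℝ)
    (β βplus u : Fin p → ℝ)
    (hu : u = Xᵀ.mulVec Y + (d • (1 : Matrix (Fin p) (Fin p) ℝ) - Xᵀ * X).mulVec β)
    (hβplus : ∀ j, βplus j = Real.sign (u j) * (max (|u j| - lam) 0 / d))
    (e : Fin p → ℝ) (i j : Fin p) (hij : i ≠ j)
    (he0 : ∀ k, k ≠ i → k ≠ j → e k = 0) (hei : e i = 1)
    (hej : e j = 1 ∨ e j = -1)
    (hXe : X.mulVec e = 0) (heβ : ∑ k, e k * β k = 0) :
    ∑ k, e k * βplus k = 0 := by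
  have hpair (f : Fin p → ℝ) : ∑ k, e k * f k = f i + e j * f j := by
    rw [Fintype.sum_eq_add i j hij fun k hk => by rw [he0 k hk.1 hk.2, zero_mul], hei, one_mul]
  have heu : u i + e j * u j = 0 := by
    rw [← hpair u]
    change e ⬝ᵥ u = 0
    rw [hu, dotProduct_transpose_mulVec_add_smul_one_sub_mulVec hXe]
    exact mul_eq_zero_of_right d heβ
  rw [hpair, hβplus i, hβplus j]
  exact (odd_sign_mul_comp_abs fun t => max (t - lam) 0 / d).add_mul_eq_zero hej heu

/-- Lemma 2, preservation of grouping coherence by one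
lasso OEM update.
Suppose `XᵀX + ΔᵀΔ = d·I_p` with `d > 0`.  Let `u = XᵀY + (d·I_p − XᵀX)β` and
`β⁺_j = sign(u_j)·((|u_j| − λ)₊/d)`.  If `e` is a signed aliasing contrast
(all entries zero except `e_i = 1` and `e_j = ±1`, `i ≠ j`) with `Xe = 0` and
`eᵀβ = 0`, then `eᵀβ⁺ = 0`. -/
theorem stmt9 {n m p : ℕ} (X : Matrix (Fin n) (Fin p) ℝ) (Y : Fin n → ℝ)
    (Δ : Matrix (Fin m) (Fin p) ℝ) (d lam : ℝ) (hd : 0 < d) (hlam : 0 ≤ lam)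
    (hXΔ : Xᵀ * X + Δᵀ * Δ = d • (1 : Matrix (Fin p) (Fin p) ℝ))
    (β βplus u : Fin p → ℝ)
    (hu : u = Xᵀ.mulVec Y + (d • (1 : Matrix (Fin p) (Fin p) ℝ) - Xᵀ * X).mulVec β)
    (hβplus : ∀ j, βplus j = Real.sign (u j) * (max (|u j| - lam) 0 / d))
    (e : Fin p → ℝ) (i j : Fin p) (hij : i ≠ j)
    (he0 : ∀ k, k ≠ i → k ≠ j → e k = 0) (hei : e i = 1)
    (hej : e j = 1 ∨ e j = -1)
    (hXe : X.mulVec e = 0) (heβ : ∑ k, e k * β k = 0) :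
    ∑ k, e k * βplus k = 0 :=
  stmt9_general X Y d lam β βplus u hu hβplus e i j hij he0 hei hej hXe heβ
end

section
/- Let γ₁ > 0 be the largest eigenvalue of X'X and suppose X'X + Δ'Δ = γ₁·I_p. Define the ordinary least squares OEM sequence by β^{(k+1)} = γ₁⁻¹·X'Y + (I_p − γ₁⁻¹·X'X)·β^{(k)}. If β^{(0)} lies in the column space of X' (the row space of X), then β^{(k)} converges as k → ∞ to β̂* = (X'X)⁺ X'Y, the Moore–Penrose least squares estimator; equivalently, β^{(k)} converges to the unique vector β* in the column space of X' satisfying X'Xβ* = X'Y. -/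
open Filter Topology Matrix

/-!
`Xᵀ * X` kills exactly `ker X`, the orthogonal complement of the row space `range Xᵀ`, so it is
injective, hence bijective, on the row space: this gives the unique `β*` there solving the normal
equations. The error `β⁽ᵏ⁾ - β*` equals `(1 - γ₁⁻¹ • Xᵀ * X) ^ k (β⁽⁰⁾ - β*)` and stays in the row
space. Expanding it in an orthonormal eigenbasis of `Xᵀ * X`, the components along eigenvalues
`μ = 0` vanish, and every other one is multiplied at each step by `1 - μ / γ₁ ∈ [0, 1)`, because
`0 < μ ≤ γ₁`.
-/

theorem OrthonormalBasis.sum_star_dotProduct_smul {ι n 𝕜 : Type*} [Fintype ι] [Fintype n]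
    [RCLike 𝕜] (b : OrthonormalBasis ι 𝕜 (EuclideanSpace 𝕜 n)) (v : n → 𝕜) :
    ∑ i, (star ⇑(b i) ⬝ᵥ v) • ⇑(b i) = v := by
  simpa [EuclideanSpace.inner_eq_star_dotProduct, dotProduct_comm] using
    congrArg WithLp.ofLp (b.sum_repr' (WithLp.toLp 2 v))

namespace Matrix

section Iteration

variable {ι R : Type*} [Fintype ι] [DecidableEq ι]

theorem pow_mulVec_of_mulVec_eq_smul [CommSemiring R] {T : Matrix ι ι R} {w : ι → R} {r : R}
    (h : T *ᵥ w = r • w) (k : ℕ) : (T ^ k) *ᵥ w = r ^ k • w := by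
  induction k with
  | zero => simp
  | succ k ih => rw [pow_succ', ← mulVec_mulVec, ih, mulVec_smul, h, smul_smul, pow_succ]

theorem sub_eq_pow_mulVec_of_affine_iterate [CommRing R] {T : Matrix ι ι R} {c b : ι → R}
    {x : ℕ → ι → R} (hx : ∀ k, x (k + 1) = c + T *ᵥ x k) (hb : c + T *ᵥ b = b) (k : ℕ) :
    x k - b = (T ^ k) *ᵥ (x 0 - b) := by
  induction k with
  | zero => simp
  | succ k ih =>
    rw [pow_succ', ← mulVec_mulVec, ← ih, hx, mulVec_sub]
    nth_rewrite 1 [← hb]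
    abel

theorem PosSemidef.tendsto_pow_one_sub_smul_mulVec {A : Matrix ι ι ℝ} (hA : A.PosSemidef)
    {γ : ℝ} (hγ : 0 < γ) (hle : ∀ (μ : ℝ) (w : ι → ℝ), w ≠ 0 → A *ᵥ w = μ • w → μ ≤ γ)
    {v : ι → ℝ} (hv : ∀ w, A *ᵥ w = 0 → w ⬝ᵥ v = 0) :
    Tendsto (fun k => (1 - γ⁻¹ • A) ^ k *ᵥ v) atTop (𝓝 0) := by
  set w : ι → ι → ℝ := fun i => ⇑(hA.1.eigenvectorBasis i)
  set μ := hA.1.eigenvalues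
  have hw : ∀ i, A *ᵥ w i = μ i • w i := hA.1.mulVec_eigenvectorBasis
  have hstep : ∀ i, (1 - γ⁻¹ • A) *ᵥ w i = (1 - γ⁻¹ * μ i) • w i := fun i => by
    rw [sub_mulVec, one_mulVec, smul_mulVec, hw, smul_smul, sub_smul, one_smul]
  have hexpand : ∀ k, (1 - γ⁻¹ • A) ^ k *ᵥ v =
      ∑ i, ((w i ⬝ᵥ v) * (1 - γ⁻¹ * μ i) ^ k) • w i := by
    intro k
    conv_lhs => rw [← hA.1.eigenvectorBasis.sum_star_dotProduct_smul v, mulVec_sum]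
    refine Finset.sum_congr rfl fun i _ => ?_
    rw [star_trivial, mulVec_smul, pow_mulVec_of_mulVec_eq_smul (hstep i), smul_smul]
  rw [funext hexpand, ← Finset.sum_const_zero]
  refine tendsto_finsetSum _ fun i _ => ?_
  have hμ0 : 0 ≤ μ i := hA.eigenvalues_nonneg i
  rcases hμ0.eq_or_lt with hμ | hμ
  · have : w i ⬝ᵥ v = 0 := hv _ (by rw [hw, ← hμ, zero_smul])
    simp [this]
  · have hwi : w i ≠ 0 := fun h =>
      hA.1.eigenvectorBasis.orthonormal.ne_zero i (by ext j; exact congrFun h j)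
    have hr0 : 0 ≤ 1 - γ⁻¹ * μ i := by
      rw [sub_nonneg, inv_mul_le_one₀ hγ]
      exact hle _ _ hwi (hw i)
    have hr1 : 1 - γ⁻¹ * μ i < 1 := by
      have := mul_pos (inv_pos.2 hγ) hμ
      linarith
    simpa using
      ((tendsto_pow_atTop_nhds_zero_of_lt_one hr0 hr1).const_mul (w i ⬝ᵥ v)).smul_const (w i)

end Iteration

section RowSpace

variable {m n : Type*} [Fintype m] [Fintype n]

theorem transpose_mul_self_mulVec_eq_zero_iff (X : Matrix m n ℝ) (w : n → ℝ) :
    (Xᵀ * X) *ᵥ w = 0 ↔ X *ᵥ w = 0 := by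
  simpa using conjTranspose_mul_self_mulVec_eq_zero X w

theorem dotProduct_eq_zero_of_mem_range_transpose_mulVec {X : Matrix m n ℝ} {v w : n → ℝ}
    (hv : v ∈ Set.range Xᵀ.mulVec) (hw : X *ᵥ w = 0) : w ⬝ᵥ v = 0 := by
  obtain ⟨u, rfl⟩ := hv
  rw [dotProduct_mulVec, vecMul_transpose, hw, zero_dotProduct]

theorem existsUnique_mem_range_transpose_mulVec (X : Matrix m n ℝ) (y : m → ℝ) :
    ∃! b, b ∈ Set.range Xᵀ.mulVec ∧ (Xᵀ * X) *ᵥ b = Xᵀ *ᵥ y := by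
  let V := LinearMap.range Xᵀ.mulVecLin
  have hmaps : Set.MapsTo (Xᵀ * X).mulVecLin V V := fun v _ => ⟨X *ᵥ v, by simp⟩
  let f := (Xᵀ * X).mulVecLin.restrict hmaps
  have hinj : Function.Injective f := by
    rw [← LinearMap.ker_eq_bot, LinearMap.ker_eq_bot']
    rintro ⟨v, hv⟩ hfv
    have hXv : X *ᵥ v = 0 :=
      (transpose_mul_self_mulVec_eq_zero_iff X v).mp (congrArg Subtype.val hfv)
    exact Subtype.ext <| dotProduct_self_eq_zero.mp <|
      dotProduct_eq_zero_of_mem_range_transpose_mulVec hv hXv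
  obtain ⟨⟨b, hb⟩, hfb⟩ := LinearMap.injective_iff_surjective.mp hinj ⟨Xᵀ *ᵥ y, y, rfl⟩
  refine ⟨b, ⟨hb, congrArg Subtype.val hfb⟩, fun b' ⟨hb', hb'y⟩ => ?_⟩
  exact congrArg Subtype.val <| @hinj ⟨b', hb'⟩ ⟨b, hb⟩ <|
    Subtype.ext (hb'y.trans (congrArg Subtype.val hfb).symm)

end RowSpace

end Matrix

theorem stmt11_general {n p : ℕ} (X : Matrix (Fin n) (Fin p) ℝ) (Y : Fin n → ℝ)
    (γ1 : ℝ) (hγ1 : 0 < γ1)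
    (hmax : ∀ (μ : ℝ) (v : Fin p → ℝ), v ≠ 0 → (Xᵀ * X).mulVec v = μ • v → μ ≤ γ1)
    (βs : ℕ → Fin p → ℝ)
    (hrec : ∀ k, βs (k + 1) =
      γ1⁻¹ • Xᵀ.mulVec Y + ((1 : Matrix (Fin p) (Fin p) ℝ) - γ1⁻¹ • (Xᵀ * X)).mulVec (βs k))
    (h0 : βs 0 ∈ Set.range Xᵀ.mulVec) :
    ∃ bstar : Fin p → ℝ,
      bstar ∈ Set.range Xᵀ.mulVec ∧
      (Xᵀ * X).mulVec bstar = Xᵀ.mulVec Y ∧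
      (∀ b : Fin p → ℝ, b ∈ Set.range Xᵀ.mulVec →
        (Xᵀ * X).mulVec b = Xᵀ.mulVec Y → b = bstar) ∧
      Tendsto βs atTop (𝓝 bstar) := by
  obtain ⟨bstar, ⟨hmem, hnormal⟩, huniq⟩ := existsUnique_mem_range_transpose_mulVec X Y
  refine ⟨bstar, hmem, hnormal, fun b hb hbY => huniq b ⟨hb, hbY⟩, ?_⟩
  have hfixed : γ1⁻¹ • Xᵀ *ᵥ Y + (1 - γ1⁻¹ • (Xᵀ * X)) *ᵥ bstar = bstar := by
    rw [sub_mulVec, one_mulVec, smul_mulVec, hnormal, add_sub_cancel]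
  have he0 : βs 0 - bstar ∈ Set.range Xᵀ.mulVec := by
    obtain ⟨u, hu⟩ := h0
    obtain ⟨u', hu'⟩ := hmem
    exact ⟨u - u', by rw [mulVec_sub, hu, hu']⟩
  have hpsd : (Xᵀ * X).PosSemidef := by simpa using posSemidef_conjTranspose_mul_self X
  have herr : Tendsto (fun k => βs k - bstar) atTop (𝓝 0) := by
    rw [funext (sub_eq_pow_mulVec_of_affine_iterate hrec hfixed)]
    exact hpsd.tendsto_pow_one_sub_smul_mulVec hγ1 hmax fun w hw =>
      dotProduct_eq_zero_of_mem_range_transpose_mulVec he0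
        ((transpose_mul_self_mulVec_eq_zero_iff X w).mp hw)
  simpa using herr.add_const bstar

/-- Theorem 8, OLS OEM converges to the Moore–Penrose
least squares estimator.
Let `γ₁ > 0` be the largest eigenvalue of `XᵀX` and suppose
`XᵀX + ΔᵀΔ = γ₁·I_p`.  Define the OLS OEM sequence by
`β⁽ᵏ⁺¹⁾ = γ₁⁻¹ XᵀY + (I_p − γ₁⁻¹ XᵀX) β⁽ᵏ⁾`.  If `β⁽⁰⁾` lies in the column
space of `Xᵀ`, then `β⁽ᵏ⁾` converges to `(XᵀX)⁺XᵀY`, i.e. to the unique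
vector `β*` in the column space of `Xᵀ` satisfying the normal equations
`XᵀXβ* = XᵀY`. -/
theorem stmt11 {n m p : ℕ} (X : Matrix (Fin n) (Fin p) ℝ) (Y : Fin n → ℝ)
    (Δ : Matrix (Fin m) (Fin p) ℝ) (γ1 : ℝ) (hγ1 : 0 < γ1)
    (hev : ∃ v : Fin p → ℝ, v ≠ 0 ∧ (Xᵀ * X).mulVec v = γ1 • v)
    (hmax : ∀ (μ : ℝ) (v : Fin p → ℝ), v ≠ 0 → (Xᵀ * X).mulVec v = μ • v → μ ≤ γ1)
    (hXΔ : Xᵀ * X + Δᵀ * Δ = γ1 • (1 : Matrix (Fin p) (Fin p) ℝ))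
    (βs : ℕ → Fin p → ℝ)
    (hrec : ∀ k, βs (k + 1) =
      γ1⁻¹ • Xᵀ.mulVec Y + ((1 : Matrix (Fin p) (Fin p) ℝ) - γ1⁻¹ • (Xᵀ * X)).mulVec (βs k))
    (h0 : βs 0 ∈ Set.range Xᵀ.mulVec) :
    ∃ bstar : Fin p → ℝ,
      bstar ∈ Set.range Xᵀ.mulVec ∧
      (Xᵀ * X).mulVec bstar = Xᵀ.mulVec Y ∧
      (∀ b : Fin p → ℝ, b ∈ Set.range Xᵀ.mulVec →
        (Xᵀ * X).mulVec b = Xᵀ.mulVec Y → b = bstar) ∧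
      Tendsto βs atTop (𝓝 bstar) :=
  stmt11_general X Y γ1 hγ1 hmax βs hrec h0
end

section
/- Let X be an n×p real matrix with X ≠ 0, let γ₁ > 0 be the largest eigenvalue of X'X, and let D = I_p − γ₁⁻¹·X'X. Then as k → ∞, the matrix powers D^k converge to the orthogonal projection matrix onto the kernel of X (equivalently, onto the orthogonal complement of the column space of X'). -/
open Filter Topology Matrix

/-!
`D` is symmetric, and since the eigenvalues of `XᵀX` lie in `[0, γ₁]` its spectrum lies in
`[0, 1]`; diagonalizing `D` orthogonally shows that `D ^ k` converges. Any limit `P` of the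
powers of `D` is symmetric and idempotent and satisfies `D * P = P`, i.e. `XᵀX * P = 0`, whence
`X * P = 0`; and `P` fixes every vector fixed by `D`, in particular every vector of `ker X`.
-/

section TendstoPow

variable {M : Type*} [Monoid M] [TopologicalSpace M] [ContinuousMul M] [T2Space M] {a p : M}

theorem isIdempotentElem_of_tendsto_pow (h : Tendsto (fun k : ℕ => a ^ k) atTop (𝓝 p)) :
    IsIdempotentElem p := by
  have hdouble : Tendsto (fun k : ℕ => a ^ (k + k)) atTop (𝓝 p) :=
    h.comp (tendsto_atTop_mono (fun k => Nat.le_add_left k k) tendsto_id)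
  simp_rw [pow_add] at hdouble
  exact tendsto_nhds_unique (h.mul h) hdouble

theorem mul_eq_of_tendsto_pow (h : Tendsto (fun k : ℕ => a ^ k) atTop (𝓝 p)) : a * p = p := by
  have hsucc : Tendsto (fun k : ℕ => a ^ (k + 1)) atTop (𝓝 p) :=
    h.comp (tendsto_add_atTop_nat 1)
  simp_rw [pow_succ'] at hsucc
  exact tendsto_nhds_unique (h.const_mul a) hsucc

end TendstoPow

theorem tendsto_pow_atTop_nhds_ite_of_mem_Ioc {x : ℝ} (hx : x ∈ Set.Ioc (-1) 1) :
    Tendsto (fun k : ℕ => x ^ k) atTop (𝓝 (if x = 1 then 1 else 0)) := by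
  rcases hx.2.eq_or_lt with rfl | hlt
  · simp
  · rw [if_neg hlt.ne]
    exact tendsto_pow_atTop_nhds_zero_of_abs_lt_one (abs_lt.2 ⟨hx.1, hlt⟩)

namespace Matrix

variable {m n R : Type*} [Fintype n]

theorem nonneg_of_transpose_mul_self_mulVec_eq_smul [Fintype m] {X : Matrix m n ℝ} {μ : ℝ}
    {v : n → ℝ} (hv : v ≠ 0) (h : (Xᵀ * X) *ᵥ v = μ • v) : 0 ≤ μ := by
  have hquad : μ * (v ⬝ᵥ v) = (X *ᵥ v) ⬝ᵥ (X *ᵥ v) := by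
    rw [← smul_eq_mul, ← dotProduct_smul, ← h, ← mulVec_mulVec, dotProduct_mulVec,
      vecMul_transpose]
  have hpos : 0 < v ⬝ᵥ v := by simpa using dotProduct_star_self_pos_iff.2 hv
  have hnonneg : 0 ≤ (X *ᵥ v) ⬝ᵥ (X *ᵥ v) := by
    simpa using dotProduct_star_self_nonneg (X *ᵥ v)
  exact (mul_nonneg_iff_of_pos_right hpos).1 (hquad ▸ hnonneg)

variable [DecidableEq n]

theorem IsSymm.of_tendsto_pow [CommSemiring R] [TopologicalSpace R] [T2Space R]
    {D P : Matrix n n R} (hD : D.IsSymm) (h : Tendsto (fun k : ℕ => D ^ k) atTop (𝓝 P)) :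
    P.IsSymm :=
  (isClosed_eq continuous_id.matrix_transpose continuous_id).mem_of_tendsto h
    (Eventually.of_forall hD.pow)

theorem mulVec_eq_self_of_tendsto_pow [Semiring R] [TopologicalSpace R]
    [IsTopologicalSemiring R] [T2Space R] {D P : Matrix n n R}
    (h : Tendsto (fun k : ℕ => D ^ k) atTop (𝓝 P)) {v : n → R} (hv : D *ᵥ v = v) :
    P *ᵥ v = v := by
  have hpow : ∀ k : ℕ, D ^ k *ᵥ v = v := by
    intro k
    induction k with
    | zero => simp
    | succ k ih => rw [pow_succ', ← mulVec_mulVec, ih, hv]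
  have hcont : Continuous fun M : Matrix n n R => M *ᵥ v := by fun_prop
  have hlim := (hcont.tendsto P).comp h
  simp only [Function.comp_def, hpow] at hlim
  exact tendsto_nhds_unique hlim tendsto_const_nhds

theorem exists_mulVec_eq_smul_of_mem_spectrum {K : Type*} [Field K] {A : Matrix n n K}
    {μ : K} (h : μ ∈ spectrum K A) : ∃ v ≠ 0, A *ᵥ v = μ • v := by
  rw [← spectrum_toLin', ← Module.End.hasEigenvalue_iff_mem_spectrum] at h
  obtain ⟨v, hv, hv0⟩ := h.exists_hasEigenvector
  exact ⟨v, hv0, Module.End.mem_eigenspace_iff.1 hv⟩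

theorem IsHermitian.exists_tendsto_pow {𝕜 : Type*} [RCLike 𝕜] {D : Matrix n n 𝕜}
    (hD : D.IsHermitian) (hspec : spectrum ℝ D ⊆ Set.Ioc (-1) 1) :
    ∃ P, Tendsto (fun k : ℕ => D ^ k) atTop (𝓝 P) := by
  rw [hD.spectrum_real_eq_range_eigenvalues, Set.range_subset_iff] at hspec
  set conj := Unitary.conjStarAlgAut 𝕜 _ hD.eigenvectorUnitary
  have hpow (k : ℕ) : D ^ k = conj (diagonal fun i => ((hD.eigenvalues i ^ k : ℝ) : 𝕜)) := by
    conv_lhs => rw [hD.spectral_theorem]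
    rw [← map_pow, diagonal_pow]
    push_cast
    rfl
  have hconj : Continuous conj := conj.toAlgEquiv.toLinearMap.continuous_of_finiteDimensional
  refine ⟨conj (diagonal fun i => ((if hD.eigenvalues i = 1 then 1 else 0 : ℝ) : 𝕜)), ?_⟩
  simp_rw [hpow]
  exact (hconj.tendsto _).comp <| (continuous_id.matrix_diagonal.tendsto _).comp <|
    tendsto_pi_nhds.2 fun i =>
      (RCLike.continuous_ofReal.tendsto _).comp (tendsto_pow_atTop_nhds_ite_of_mem_Ioc (hspec i))

theorem spectrum_one_sub_inv_smul_transpose_mul_self_subset [Fintype m] {X : Matrix m n ℝ}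
    {γ : ℝ} (hγ : 0 < γ)
    (hmax : ∀ (μ : ℝ) (v : n → ℝ), v ≠ 0 → (Xᵀ * X) *ᵥ v = μ • v → μ ≤ γ) :
    spectrum ℝ (1 - γ⁻¹ • (Xᵀ * X)) ⊆ Set.Icc 0 1 := by
  intro μ hμ
  obtain ⟨v, hv, hDv⟩ := exists_mulVec_eq_smul_of_mem_spectrum hμ
  have hAv : (Xᵀ * X) *ᵥ v = (γ * (1 - μ)) • v := by
    rw [sub_mulVec, one_mulVec, smul_mulVec] at hDv
    have hscaled : γ⁻¹ • ((Xᵀ * X) *ᵥ v) = (1 - μ) • v := by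
      rw [sub_smul, one_smul, ← hDv, sub_sub_cancel]
    rw [mul_smul, ← hscaled, smul_smul, mul_inv_cancel₀ hγ.ne', one_smul]
  have hlow := nonneg_of_transpose_mul_self_mulVec_eq_smul hv hAv
  have hup := hmax _ v hv hAv
  constructor <;> nlinarith

end Matrix

theorem stmt12_general {n p : ℕ} (X : Matrix (Fin n) (Fin p) ℝ)
    (γ1 : ℝ) (hγ1 : 0 < γ1)
    (hmax : ∀ (μ : ℝ) (v : Fin p → ℝ), v ≠ 0 → (Xᵀ * X).mulVec v = μ • v → μ ≤ γ1)
    (D : Matrix (Fin p) (Fin p) ℝ)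
    (hD : D = (1 : Matrix (Fin p) (Fin p) ℝ) - γ1⁻¹ • (Xᵀ * X)) :
    ∃ Pker : Matrix (Fin p) (Fin p) ℝ,
      Pkerᵀ = Pker ∧
      Pker * Pker = Pker ∧
      (∀ v : Fin p → ℝ, X.mulVec (Pker.mulVec v) = 0) ∧
      (∀ v : Fin p → ℝ, X.mulVec v = 0 → Pker.mulVec v = v) ∧
      Tendsto (fun k => D ^ k) atTop (𝓝 Pker) := by
  have hgram_symm : (Xᵀ * X).IsSymm := by rw [IsSymm, transpose_mul, transpose_transpose]
  have hDsymm : D.IsSymm := hD ▸ isSymm_one.sub (hgram_symm.smul _)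
  have hspec : spectrum ℝ D ⊆ Set.Ioc (-1) 1 := by
    rw [hD]
    exact (spectrum_one_sub_inv_smul_transpose_mul_self_subset hγ1 hmax).trans
      fun μ hμ => ⟨by linarith [hμ.1], hμ.2⟩
  obtain ⟨P, hP⟩ := (isHermitian_iff_isSymm.2 hDsymm).exists_tendsto_pow hspec
  have hgram : Xᵀ * X = γ1 • (1 - D) := by
    rw [hD, sub_sub_cancel, smul_smul, mul_inv_cancel₀ hγ1.ne', one_smul]
  have hgramP : Xᵀ * X * P = 0 := by
    rw [hgram, smul_mul_assoc, Matrix.sub_mul, Matrix.one_mul, mul_eq_of_tendsto_pow hP, sub_self,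
      smul_zero]
  refine ⟨P, hDsymm.of_tendsto_pow hP, isIdempotentElem_of_tendsto_pow hP, fun v => ?_,
    fun v hv => mulVec_eq_self_of_tendsto_pow hP ?_, hP⟩
  · have hker : (Xᵀ * X) *ᵥ (P *ᵥ v) = 0 := by rw [mulVec_mulVec, hgramP, zero_mulVec]
    exact (ker_mulVecLin_transpose_mul_self X).le hker
  · rw [hD, sub_mulVec, one_mulVec, smul_mulVec, ← mulVec_mulVec, hv, mulVec_zero, smul_zero,
      sub_zero]

/-- Let `X ≠ 0` be an `n × p` real matrix, `γ₁ > 0` its largest eigenvalue of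
`XᵀX`, and `D = I_p − γ₁⁻¹ XᵀX`.  Then `D^k` converges, as `k → ∞`, to the
orthogonal projection matrix onto the kernel of `X` (the orthogonal
complement of the column space of `Xᵀ`). -/
theorem stmt12 {n p : ℕ} (X : Matrix (Fin n) (Fin p) ℝ) (hX : X ≠ 0)
    (γ1 : ℝ) (hγ1 : 0 < γ1)
    (hev : ∃ v : Fin p → ℝ, v ≠ 0 ∧ (Xᵀ * X).mulVec v = γ1 • v)
    (hmax : ∀ (μ : ℝ) (v : Fin p → ℝ), v ≠ 0 → (Xᵀ * X).mulVec v = μ • v → μ ≤ γ1)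
    (D : Matrix (Fin p) (Fin p) ℝ)
    (hD : D = (1 : Matrix (Fin p) (Fin p) ℝ) - γ1⁻¹ • (Xᵀ * X)) :
    ∃ Pker : Matrix (Fin p) (Fin p) ℝ,
      Pkerᵀ = Pker ∧
      Pker * Pker = Pker ∧
      (∀ v : Fin p → ℝ, X.mulVec (Pker.mulVec v) = 0) ∧
      (∀ v : Fin p → ℝ, X.mulVec v = 0 → Pker.mulVec v = v) ∧
      Tendsto (fun k => D ^ k) atTop (𝓝 Pker) :=
  stmt12_general X γ1 hγ1 hmax D hD
end

section
/- Suppose X'X + Δ'Δ = D, where D is a p×p diagonal matrix with diagonal entries d₁, …, d_p. Fix φ ∈ ℝ^p and let u = X'Y + Δ'Δφ with components u₁, …, u_p. Then for every β ∈ ℝ^p, ‖Y − Xβ‖² + ‖Δφ − Δβ‖² = Σ_{j=1}^p (d_j β_j² − 2 u_j β_j) + ‖Y‖² + ‖Δφ‖². In particular, minimizing β ↦ ‖Y − Xβ‖² + ‖Δφ − Δβ‖² + P(β) over a product set Θ = Π_j Θ_j with a separable penalty P(β) = Σ_j P_j(β_j) is equivalent to the p one-dimensional problems of minimizing β_j ↦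 d_j β_j² − 2 u_j β_j + P_j(β_j) over Θ_j. -/
open Matrix

/-! Expanding both squares, the part of the objective that is quadratic in `β` is
`β'(X'X + Δ'Δ)β = ∑ d_j β_j²` and the linear part is `-2 u'β`, so up to the constant
`‖Y‖² + ‖Δφ‖²` the objective is a sum of functions of single coordinates. Such a sum is
minimized over a product set exactly when each summand is minimized over its factor:
for the converse, change one coordinate of the minimizer at a time. -/

theorem EuclideanSpace.real_norm_sq_eq_dotProduct {ι : Type*} [Fintype ι]
    (x : EuclideanSpace ℝ ι) : ‖x‖ ^ 2 = x.ofLp ⬝ᵥ x.ofLp := by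
  rw [← real_inner_self_eq_norm_sq, EuclideanSpace.inner_eq_star_dotProduct, star_trivial]

theorem Matrix.dotProduct_sub_mulVec_self {R m n : Type*} [CommRing R] [Fintype m] [Fintype n]
    (A : Matrix m n R) (y : m → R) (b : n → R) :
    (y - A *ᵥ b) ⬝ᵥ (y - A *ᵥ b)
      = y ⬝ᵥ y - 2 * ((Aᵀ *ᵥ y) ⬝ᵥ b) + b ⬝ᵥ ((Aᵀ * A) *ᵥ b) := by
  have hcross : y ⬝ᵥ (A *ᵥ b) = (Aᵀ *ᵥ y) ⬝ᵥ b := by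
    rw [dotProduct_mulVec, mulVec_transpose]
  have hquad : (A *ᵥ b) ⬝ᵥ (A *ᵥ b) = b ⬝ᵥ ((Aᵀ * A) *ᵥ b) := by
    rw [← mulVec_mulVec, dotProduct_mulVec b, vecMul_transpose, dotProduct_comm]
  simp only [sub_dotProduct, dotProduct_sub, dotProduct_comm (A *ᵥ b) y, hcross, hquad]
  ring

theorem Matrix.sum_quadratic_eq_dotProduct_diagonal_mulVec {ι R : Type*} [Fintype ι]
    [DecidableEq ι] [CommRing R]
    (d u b : ι → R) :
    ∑ j, (d j * b j ^ 2 - 2 * u j * b j) = b ⬝ᵥ (diagonal d *ᵥ b) - 2 * (u ⬝ᵥ b) := by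
  simp only [dotProduct, mulVec_diagonal, Finset.sum_sub_distrib, Finset.mul_sum]
  congr 1 <;> refine Finset.sum_congr rfl fun j _ => by ring

theorem forall_sum_le_sum_iff_forall_le {ι α M : Type*} [Fintype ι] [DecidableEq ι]
    [AddCommMonoid M] [PartialOrder M] [IsOrderedCancelAddMonoid M]
    (g : ι → α → M) (Θ : ι → Set α) (x : ι → α) (hx : ∀ i, x i ∈ Θ i) :
    (∀ y : ι → α, (∀ i, y i ∈ Θ i) → ∑ i, g i (x i) ≤ ∑ i, g i (y i)) ↔
      ∀ i, ∀ b ∈ Θ i, g i (x i) ≤ g i b := by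
  refine ⟨fun h i b hb => ?_, fun h y hy => Finset.sum_le_sum fun i _ => h i (y i) (hy i)⟩
  have hmem : ∀ k, Function.update x i b k ∈ Θ k := by
    intro k
    rcases eq_or_ne k i with rfl | hne
    · simpa using hb
    · simpa [hne] using hx k
  have hle := h _ hmem
  rw [Finset.sum_congr rfl (fun k _ => Function.apply_update g x i b k),
    Finset.sum_update_of_mem (Finset.mem_univ i),
    Finset.sum_eq_add_sum_sdiff_singleton_of_mem (Finset.mem_univ i)] at hle
  exact le_of_add_le_add_right hle

theorem ofLp_mulVecE {n p : ℕ} (X : Matrix (Fin n) (Fin p) ℝ)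
    (β : EuclideanSpace ℝ (Fin p)) :
    (mulVecE X β).ofLp = X *ᵥ β.ofLp := rfl

theorem norm_sub_mulVecE_sq {q p : ℕ} (A : Matrix (Fin q) (Fin p) ℝ)
    (y : EuclideanSpace ℝ (Fin q)) (β : EuclideanSpace ℝ (Fin p)) :
    ‖y - mulVecE A β‖ ^ 2
      = ‖y‖ ^ 2 - 2 * ((Aᵀ *ᵥ y.ofLp) ⬝ᵥ β.ofLp) + β.ofLp ⬝ᵥ ((Aᵀ * A) *ᵥ β.ofLp) := by
  simp only [EuclideanSpace.real_norm_sq_eq_dotProduct, WithLp.ofLp_sub, ofLp_mulVecE]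
  exact dotProduct_sub_mulVec_self A _ _

/-- separability of the OEM M-step.
Suppose `XᵀX + ΔᵀΔ = D` with `D` diagonal with entries `d₁, …, d_p`.  Fix `φ`
and let `u = XᵀY + ΔᵀΔφ`.  Then
`‖Y − Xβ‖² + ‖Δφ − Δβ‖² = ∑_j (d_j β_j² − 2 u_j β_j) + ‖Y‖² + ‖Δφ‖²` for all
`β`; consequently, minimizing `β ↦ ‖Y − Xβ‖² + ‖Δφ − Δβ‖² + ∑_j P_j(β_j)`
over a product set `∏_j Θ_j` is equivalent to the `p` one-dimensional
problems of minimizing `β_j ↦ d_j β_j² − 2 u_j β_j + P_j(β_j)` over `Θ_j`. -/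
theorem stmt13 {n m p : ℕ} (X : Matrix (Fin n) (Fin p) ℝ)
    (Y : EuclideanSpace ℝ (Fin n)) (Δ : Matrix (Fin m) (Fin p) ℝ)
    (ds : Fin p → ℝ)
    (hdiag : Xᵀ * X + Δᵀ * Δ = Matrix.diagonal ds)
    (φ : EuclideanSpace ℝ (Fin p)) (u : Fin p → ℝ)
    (hu : ∀ j, u j = (∑ i, X i j * Y i) + ∑ i, (Δᵀ * Δ) j i * φ i) :
    (∀ β : EuclideanSpace ℝ (Fin p),
      ‖Y - mulVecE X β‖ ^ 2 + ‖mulVecE Δ φ - mulVecE Δ β‖ ^ 2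
        = (∑ j, (ds j * (β j) ^ 2 - 2 * u j * β j)) + ‖Y‖ ^ 2 + ‖mulVecE Δ φ‖ ^ 2) ∧
    (∀ (Θj : Fin p → Set ℝ) (Pj : Fin p → ℝ → ℝ)
        (βstar : EuclideanSpace ℝ (Fin p)), (∀ j, βstar j ∈ Θj j) →
      ((∀ β : EuclideanSpace ℝ (Fin p), (∀ j, β j ∈ Θj j) →
          ‖Y - mulVecE X βstar‖ ^ 2 + ‖mulVecE Δ φ - mulVecE Δ βstar‖ ^ 2
            + ∑ j, Pj j (βstar j)
          ≤ ‖Y - mulVecE X β‖ ^ 2 + ‖mulVecE Δ φ - mulVecE Δ β‖ ^ 2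
            + ∑ j, Pj j (β j)) ↔
        (∀ j, ∀ b ∈ Θj j,
          ds j * (βstar j) ^ 2 - 2 * u j * βstar j + Pj j (βstar j)
            ≤ ds j * b ^ 2 - 2 * u j * b + Pj j b))) := by
  have hu' : u = Xᵀ *ᵥ Y.ofLp + (Δᵀ * Δ) *ᵥ φ.ofLp := funext hu
  have hsplit : ∀ β : EuclideanSpace ℝ (Fin p),
      ‖Y - mulVecE X β‖ ^ 2 + ‖mulVecE Δ φ - mulVecE Δ β‖ ^ 2
        = (∑ j, (ds j * (β j) ^ 2 - 2 * u j * β j)) + ‖Y‖ ^ 2 + ‖mulVecE Δ φ‖ ^ 2 := by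
    intro β
    rw [norm_sub_mulVecE_sq, norm_sub_mulVecE_sq, sum_quadratic_eq_dotProduct_diagonal_mulVec,
      ← hdiag, hu', ofLp_mulVecE, mulVec_mulVec, add_mulVec, dotProduct_add, add_dotProduct]
    ring
  refine ⟨hsplit, fun Θ P βstar hβstar => ?_⟩
  rw [← forall_sum_le_sum_iff_forall_le (fun j b => ds j * b ^ 2 - 2 * u j * b + P j b) Θ
    βstar.ofLp hβstar]
  refine (WithLp.equiv 2 (Fin p → ℝ)).forall_congr fun β => ?_
  simp only [hsplit, Finset.sum_add_distrib, WithLp.equiv_apply]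
  refine imp_congr_right fun _ => ?_
  constructor <;> intro h <;> linarith
end

section
/- Fix a > 2, λ > 0, d ≥ 1 and u ∈ ℝ. Define the SCAD penalty P_λ : [0, ∞) → ℝ by P_λ(θ) = λθ for 0 ≤ θ ≤ λ; P_λ(θ) = (2aλθ − θ² − λ²)/(2(a − 1)) for λ < θ ≤ aλ; and P_λ(θ) = (a + 1)λ²/2 for θ > aλ. Then the function h(β) = dβ² − 2uβ + 2P_λ(|β|) attains its global minimum over β ∈ ℝ at β* given by: β* = sign(u)·(|u| − λ)₊/d when |u| ≤ (d + 1)λ; β* = sign(u)·((a − 1)|u| − aλ)/((a − 1)d − 1) when (d + 1)λ < |u| ≤ aλd; and β* = u/d when |u| > aλd. -/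
/-!
Put `c(θ) = max λ (min (aλ) θ)`, the projection onto `[λ, aλ]`. Then
`2(a - 1) P_λ(θ) = 2aλθ - λ² - θ² + (θ - c(θ))²`: the SCAD penalty plus `θ²/(2(a - 1))` is
affine on `[λ, aλ]` and exceeds that affine function by `(θ - c(θ))²/(2(a - 1))` outside it.
Hence, for `v = |u|` and `t ≥ 0`,
`(a - 1)(dt² - 2vt + 2P_λ(t)) = ((a - 1)d - 1)t² - 2((a - 1)v - aλ)t - λ² + (t - c(t))²`,
a strictly convex quadratic (as `(a - 1)d > 1`) plus a squared distance to an interval.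
The threshold `s` satisfies the first-order (KKT) conditions of this function on `[0, ∞)`;
expanding around `s` leaves two squares, the first-order term and the variational inequality
of the projection `c`, all of the right sign.
Finally `dβ² - 2uβ` only decreases when `β` is replaced by `sign(u)|β|`.
-/

namespace Real

theorem mul_sign_self (u : ℝ) : u * sign u = |u| := by
  rcases lt_trichotomy u 0 with h | rfl | h
  · rw [sign_of_neg h, abs_of_neg h, mul_neg_one]
  · rw [sign_zero, abs_zero, mul_zero]
  · rw [sign_of_pos h, abs_of_pos h, mul_one]

theorem sign_mul_abs (u : ℝ) : sign u * |u| = u := by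
  rcases lt_trichotomy u 0 with h | rfl | h
  · rw [sign_of_neg h, abs_of_neg h, neg_one_mul, neg_neg]
  · rw [abs_zero, mul_zero]
  · rw [sign_of_pos h, abs_of_pos h, one_mul]

theorem abs_sign_of_ne_zero {u : ℝ} (hu : u ≠ 0) : |sign u| = 1 := by
  rcases sign_apply_eq_of_ne_zero u hu with h | h <;> simp [h]

end Real

theorem sub_clamp_mul_sub_clamp_nonpos {lo hi c : ℝ} (hc : c ∈ Set.Icc lo hi) (x : ℝ) :
    (x - max lo (min hi x)) * (c - max lo (min hi x)) ≤ 0 := by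
  obtain ⟨hlo, hhi⟩ := hc
  rcases le_total x lo with hx | hx
  · rw [min_eq_right (hx.trans (hlo.trans hhi)), max_eq_left hx]
    exact mul_nonpos_of_nonpos_of_nonneg (by linarith) (by linarith)
  rcases le_total x hi with hx' | hx'
  · rw [min_eq_right hx', max_eq_right hx, sub_self, zero_mul]
  · rw [min_eq_left hx', max_eq_right (hlo.trans hhi)]
    exact mul_nonpos_of_nonneg_of_nonpos (by linarith) (by linarith)

theorem sign_mul_minimizes_of_minimizes_on_nonneg {d u s : ℝ} {Q : ℝ → ℝ} (hs : 0 ≤ s)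
    (hu : u = 0 → s = 0)
    (hmin : ∀ t, 0 ≤ t → d * s ^ 2 - 2 * |u| * s + Q s ≤ d * t ^ 2 - 2 * |u| * t + Q t)
    (β : ℝ) :
    d * (Real.sign u * s) ^ 2 - 2 * u * (Real.sign u * s) + Q |Real.sign u * s|
      ≤ d * β ^ 2 - 2 * u * β + Q |β| := by
  have habs : |Real.sign u * s| = s := by
    rcases eq_or_ne u 0 with rfl | hu0
    · rw [hu rfl, mul_zero, abs_zero]
    · rw [abs_mul, Real.abs_sign_of_ne_zero hu0, one_mul, abs_of_nonneg hs]
  have hlin : u * (Real.sign u * s) = |u| * s := by rw [← mul_assoc, Real.mul_sign_self]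
  have hβ : u * β ≤ |u| * |β| := by rw [← abs_mul]; exact le_abs_self _
  calc d * (Real.sign u * s) ^ 2 - 2 * u * (Real.sign u * s) + Q |Real.sign u * s|
      = d * s ^ 2 - 2 * |u| * s + Q s := by
        rw [← sq_abs (Real.sign u * s), habs, mul_assoc 2 u, hlin, mul_assoc 2 |u|]
    _ ≤ d * |β| ^ 2 - 2 * |u| * |β| + Q |β| := hmin _ (abs_nonneg β)
    _ ≤ d * β ^ 2 - 2 * u * β + Q |β| := by rw [sq_abs]; linarith

noncomputable def scadPenalty (a lam θ : ℝ) : ℝ :=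
  if θ ≤ lam then lam * θ
  else if θ ≤ a * lam then (2 * a * lam * θ - θ ^ 2 - lam ^ 2) / (2 * (a - 1))
  else (a + 1) * lam ^ 2 / 2

noncomputable def scadThreshold (a lam d v : ℝ) : ℝ :=
  if v ≤ (d + 1) * lam then max (v - lam) 0 / d
  else if v ≤ a * lam * d then ((a - 1) * v - a * lam) / ((a - 1) * d - 1)
  else v / d

section Scad

variable {a lam d : ℝ}

theorem two_mul_sub_one_mul_scadPenalty (ha : 1 < a) (hlam : 0 ≤ lam) (θ : ℝ) :
    2 * (a - 1) * scadPenalty a lam θ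
      = 2 * a * lam * θ - lam ^ 2 - θ ^ 2 + (θ - max lam (min (a * lam) θ)) ^ 2 := by
  have ha1 : a - 1 ≠ 0 := by linarith
  have hlo : lam ≤ a * lam := by nlinarith
  unfold scadPenalty
  split_ifs with h1 h2
  · rw [min_eq_right (h1.trans hlo), max_eq_left h1]; ring
  · rw [min_eq_right h2, max_eq_right (le_of_not_ge h1)]; field_simp; ring
  · rw [min_eq_left (le_of_not_ge h2), max_eq_right hlo]; field_simp; ring

theorem scadThreshold_kkt (ha : 1 < a) (hlam : 0 ≤ lam) (had : 1 < (a - 1) * d) {v s : ℝ}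
    (hs : scadThreshold a lam d v = s) :
    0 ≤ s ∧ 0 ≤ (a - 1) * (d * s - v) + a * lam - max lam (min (a * lam) s) ∧
      s * ((a - 1) * (d * s - v) + a * lam - max lam (min (a * lam) s)) = 0 := by
  have ha1 : 0 < a - 1 := by linarith
  have hd : 0 < d := pos_of_mul_pos_right (by linarith) ha1.le
  have hk : 0 < (a - 1) * d - 1 := by linarith
  have hlo : lam ≤ a * lam := by nlinarith
  subst hs
  unfold scadThreshold
  split_ifs with h1 h2
  · rcases le_total v lam with hv | hv
    · rw [max_eq_right (by linarith), zero_div, min_eq_right (hlam.trans hlo), max_eq_left hlam]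
      exact ⟨le_rfl, by nlinarith, zero_mul _⟩
    · have hsl : (v - lam) / d ≤ lam := by rw [div_le_iff₀ hd]; linarith
      rw [max_eq_left (by linarith), min_eq_right (hsl.trans hlo), max_eq_left hsl]
      have hG : (a - 1) * (d * ((v - lam) / d) - v) + a * lam - lam = 0 := by field_simp; ring
      exact ⟨by positivity, hG.ge, by rw [hG, mul_zero]⟩
  · have hsl : lam ≤ ((a - 1) * v - a * lam) / ((a - 1) * d - 1) := by
      rw [le_div_iff₀ hk]; nlinarith [mul_lt_mul_of_pos_left (not_le.1 h1) ha1]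
    have hsa : ((a - 1) * v - a * lam) / ((a - 1) * d - 1) ≤ a * lam := by
      rw [div_le_iff₀ hk]; nlinarith
    rw [min_eq_right hsa, max_eq_right hsl]
    have hG : (a - 1) * (d * (((a - 1) * v - a * lam) / ((a - 1) * d - 1)) - v) + a * lam
        - ((a - 1) * v - a * lam) / ((a - 1) * d - 1) = 0 := by field_simp; ring
    exact ⟨hlam.trans hsl, hG.ge, by rw [hG, mul_zero]⟩
  · have hsa : a * lam ≤ v / d := by rw [le_div_iff₀ hd]; linarith
    rw [min_eq_left hsa, max_eq_right hlo]
    have hG : (a - 1) * (d * (v / d) - v) + a * lam - a * lam = 0 := by field_simp; ring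
    exact ⟨(hlam.trans hlo).trans hsa, hG.ge, by rw [hG, mul_zero]⟩

theorem objective_scadThreshold_le (ha : 1 < a) (hlam : 0 ≤ lam) (had : 1 < (a - 1) * d) (v : ℝ)
    {t : ℝ} (ht : 0 ≤ t) :
    d * scadThreshold a lam d v ^ 2 - 2 * v * scadThreshold a lam d v
        + 2 * scadPenalty a lam (scadThreshold a lam d v)
      ≤ d * t ^ 2 - 2 * v * t + 2 * scadPenalty a lam t := by
  obtain ⟨-, hgrad, hslack⟩ := scadThreshold_kkt ha hlam had (v := v) rfl
  have hPs := two_mul_sub_one_mul_scadPenalty ha hlam (scadThreshold a lam d v)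
  have hPt := two_mul_sub_one_mul_scadPenalty ha hlam t
  have hproj := sub_clamp_mul_sub_clamp_nonpos
    ⟨le_max_left _ _, max_le (by nlinarith) (min_le_left _ _)⟩ (scadThreshold a lam d v)
    (c := max lam (min (a * lam) t))
  set s := scadThreshold a lam d v
  set cs := max lam (min (a * lam) s)
  set ct := max lam (min (a * lam) t)
  have hexpand : (a - 1) * ((d * t ^ 2 - 2 * v * t + 2 * scadPenalty a lam t)
      - (d * s ^ 2 - 2 * v * s + 2 * scadPenalty a lam s))
      = ((a - 1) * d - 1) * (t - s) ^ 2 + ((t - ct) - (s - cs)) ^ 2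
        + 2 * ((a - 1) * (d * s - v) + a * lam - cs) * t - 2 * ((s - cs) * (ct - cs)) := by
    linear_combination hPt - hPs - 2 * hslack
  have hnonneg : 0 ≤ (a - 1) * ((d * t ^ 2 - 2 * v * t + 2 * scadPenalty a lam t)
      - (d * s ^ 2 - 2 * v * s + 2 * scadPenalty a lam s)) := by
    have hk : 0 ≤ (a - 1) * d - 1 := by linarith
    rw [hexpand]
    linarith [mul_nonneg hk (sq_nonneg (t - s)), sq_nonneg ((t - ct) - (s - cs)),
      mul_nonneg hgrad ht]
  exact sub_nonneg.1 (nonneg_of_mul_nonneg_right hnonneg (by linarith))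

end Scad

/-- closed-form SCAD thresholding.
Fix `a > 2`, `λ > 0`, `d ≥ 1` and `u ∈ ℝ`.  With the SCAD penalty `P_λ`,
the function `h(β) = dβ² − 2uβ + 2P_λ(|β|)` attains its global minimum over
`β ∈ ℝ` at the point `β*` given by the three-branch SCAD update formula. -/
theorem stmt14 (a lam d u : ℝ) (ha : 2 < a) (hlam : 0 < lam) (hd : 1 ≤ d)
    (P : ℝ → ℝ)
    (hP : ∀ θ : ℝ, 0 ≤ θ → P θ =
      if θ ≤ lam then lam * θ
      else if θ ≤ a * lam then (2 * a * lam * θ - θ ^ 2 - lam ^ 2) / (2 * (a - 1))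
      else (a + 1) * lam ^ 2 / 2)
    (βstar : ℝ)
    (hβstar : βstar =
      if |u| ≤ (d + 1) * lam then Real.sign u * (max (|u| - lam) 0 / d)
      else if |u| ≤ a * lam * d then
        Real.sign u * (((a - 1) * |u| - a * lam) / ((a - 1) * d - 1))
      else u / d) :
    ∀ β : ℝ, d * βstar ^ 2 - 2 * u * βstar + 2 * P |βstar|
      ≤ d * β ^ 2 - 2 * u * β + 2 * P |β| := by
  have had : 1 < (a - 1) * d := by nlinarith
  have hPabs (x : ℝ) : P |x| = scadPenalty a lam |x| := hP _ (abs_nonneg x)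
  have hβ : βstar = Real.sign u * scadThreshold a lam d |u| := by
    rw [hβstar, scadThreshold]
    split_ifs
    · rfl
    · rfl
    · rw [mul_div_assoc', Real.sign_mul_abs]
  have hzero : u = 0 → scadThreshold a lam d |u| = 0 := by
    rintro rfl
    rw [abs_zero, scadThreshold, if_pos (by nlinarith), max_eq_right (by linarith), zero_div]
  intro β
  rw [hβ, hPabs, hPabs]
  exact sign_mul_minimizes_of_minimizes_on_nonneg (Q := fun x => 2 * scadPenalty a lam x)
    (scadThreshold_kkt (by linarith) hlam.le had rfl).1 hzero
    (fun t ht => objective_scadThreshold_le (by linarith) hlam.le had |u| ht) β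
end

section
/- Fix a > 1, λ > 0, d ≥ 1 and u ∈ ℝ. Define the MCP penalty P_λ : [0, ∞) → ℝ by P_λ(θ) = λθ − θ²/(2a) for 0 ≤ θ ≤ aλ and P_λ(θ) = aλ²/2 for θ > aλ. Then the function h(β) = dβ² − 2uβ + 2P_λ(|β|) attains its global minimum over β ∈ ℝ at β* given by: β* = sign(u)·a·(|u| − λ)₊/(ad − 1) when |u| ≤ aλd, and β* = u/d when |u| > aλd. -/
/-!
Writing `t = |β|` and using `uβ ≤ |u| t` (with equality at `β*`, whose sign is that of `u`),
the problem reduces to minimising `g(t) = d t² − 2|u| t + 2 P_λ(t)` over `t ≥ 0`.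
Since `2 P_λ(t) ≥ 2λt − t²/a` with equality on `[0, aλ]`, the thresholded branch is the
minimiser of the convex quadratic `(d − 1/a) t² − 2(|u| − λ) t` over `t ≥ 0`, which lies in
`[0, aλ]` exactly when `|u| ≤ aλd`. Otherwise `g(t) − g(|u|/d) = d (t − |u|/d)² − (aλ − t)₊² / a`,
which is nonnegative because `d ≥ 1/a` and `aλ < |u|/d`.
-/

namespace MCP

noncomputable def mcp (a lam θ : ℝ) : ℝ :=
  if θ ≤ a * lam then lam * θ - θ ^ 2 / (2 * a) else a * lam ^ 2 / 2

noncomputable def objective (a lam d u β : ℝ) : ℝ :=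
  d * β ^ 2 - 2 * u * β + 2 * mcp a lam |β|

variable {a lam d u w β t θ : ℝ}

lemma two_mcp_of_le (h : θ ≤ a * lam) : 2 * mcp a lam θ = 2 * lam * θ - θ ^ 2 / a := by
  rw [mcp, if_pos h]
  ring

lemma two_mcp_of_lt (h : a * lam < θ) : 2 * mcp a lam θ = a * lam ^ 2 := by
  rw [mcp, if_neg h.not_ge]
  ring

lemma two_mul_sub_sq_div_eq (ha : a ≠ 0) :
    2 * lam * θ - θ ^ 2 / a = a * lam ^ 2 - (a * lam - θ) ^ 2 / a := by
  field_simp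
  ring

lemma two_mul_sub_sq_div_le_two_mcp (ha : 0 < a) (θ : ℝ) :
    2 * lam * θ - θ ^ 2 / a ≤ 2 * mcp a lam θ := by
  rcases le_or_gt θ (a * lam) with h | h
  · rw [two_mcp_of_le h]
  · rw [two_mcp_of_lt h, two_mul_sub_sq_div_eq ha.ne']
    have : 0 ≤ (a * lam - θ) ^ 2 / a := by positivity
    linarith

lemma objective_abs_le : objective a lam d |u| |β| ≤ objective a lam d u β := by
  have : u * β ≤ |u| * |β| := (le_abs_self _).trans (abs_mul u β).le
  simp only [objective, abs_abs, sq_abs]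
  linarith

lemma objective_abs_of_mul_nonneg (h : 0 ≤ u * β) :
    objective a lam d |u| |β| = objective a lam d u β := by
  have : |u| * |β| = u * β := by rw [← abs_mul, abs_of_nonneg h]
  simp only [objective, abs_abs, sq_abs]
  linarith

lemma objective_threshold_le (ha : 0 < a) (had : 1 < a * d) (hlam : 0 ≤ lam)
    (hw : w ≤ a * lam * d) (ht : 0 ≤ t) :
    objective a lam d w (a * max (w - lam) 0 / (a * d - 1)) ≤ objective a lam d w t := by
  set m := max (w - lam) 0
  set s := a * m / (a * d - 1)
  have hc : 0 < a * d - 1 := by linarith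
  have hs : (a * d - 1) * s = a * m := mul_div_cancel₀ _ hc.ne'
  have hws : (w - lam) * s = m * s := by
    rcases max_cases (w - lam) 0 with ⟨h, -⟩ | ⟨h, -⟩
    · rw [show m = w - lam from h]
    · simp [s, show m = 0 from h]
  have hsa : s ≤ a * lam := by
    have : m ≤ lam * (a * d - 1) := max_le (by linarith) (by positivity)
    rw [div_le_iff₀ hc]
    nlinarith
  have hquad : d * t ^ 2 - 2 * w * t + (2 * lam * t - t ^ 2 / a)
      - (d * s ^ 2 - 2 * w * s + (2 * lam * s - s ^ 2 / a))
      = ((a * d - 1) * (t - s) ^ 2 + 2 * a * (m - (w - lam)) * t) / a := by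
    field_simp
    linear_combination (2 * (t - s)) * hs + (2 * a) * hws
  have : 0 ≤ ((a * d - 1) * (t - s) ^ 2 + 2 * a * (m - (w - lam)) * t) / a := by
    have : 0 ≤ m - (w - lam) := sub_nonneg.2 (le_max_left _ _)
    positivity
  rw [objective, objective, abs_of_nonneg (by positivity), abs_of_nonneg ht, two_mcp_of_le hsa]
  linarith [two_mul_sub_sq_div_le_two_mcp (lam := lam) ha t]

lemma objective_div_le (ha : 0 < a) (hd : 0 < d) (had : 1 ≤ a * d) (hlam : 0 ≤ lam)
    (hw : a * lam * d < w) (ht : 0 ≤ t) :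
    objective a lam d w (w / d) ≤ objective a lam d w t := by
  have hwd : a * lam < w / d := by rwa [lt_div_iff₀ hd]
  have hvalue : objective a lam d w (w / d) = a * lam ^ 2 - w ^ 2 / d := by
    rw [objective, abs_of_nonneg ((mul_nonneg ha.le hlam).trans hwd.le), two_mcp_of_lt hwd]
    field_simp
    ring
  have hsq : d * t ^ 2 - 2 * w * t = d * (w / d - t) ^ 2 - w ^ 2 / d := by
    field_simp
    ring
  rw [hvalue, objective, abs_of_nonneg ht, hsq]
  rcases le_or_gt t (a * lam) with h | h
  · rw [two_mcp_of_le h, two_mul_sub_sq_div_eq ha.ne']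
    have hle_mul : (a * lam - t) ^ 2 / a ≤ d * (a * lam - t) ^ 2 := by
      rw [div_le_iff₀ ha]
      nlinarith [sq_nonneg (a * lam - t)]
    have hgap : d * (a * lam - t) ^ 2 ≤ d * (w / d - t) ^ 2 := by
      gcongr
    linarith
  · rw [two_mcp_of_lt h]
    nlinarith [sq_nonneg (w / d - t)]

lemma abs_sign_mul {x : ℝ} (h : u = 0 → x = 0) : |Real.sign u * x| = |x| := by
  rcases eq_or_ne u 0 with hu | hu
  · simp [hu, h hu]
  · rcases Real.sign_apply_eq_of_ne_zero u hu with hs | hs <;> simp [hs]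

lemma mul_sign_mul_nonneg {x : ℝ} (hx : 0 ≤ x) : 0 ≤ u * (Real.sign u * x) := by
  rw [← mul_assoc, mul_comm u]
  exact mul_nonneg (Real.sign_mul_nonneg u) hx

end MCP

open MCP in
/-- closed-form MCP thresholding.
Fix `a > 1`, `λ > 0`, `d ≥ 1` and `u ∈ ℝ`.  With the MCP penalty `P_λ`,
the function `h(β) = dβ² − 2uβ + 2P_λ(|β|)` attains its global minimum over
`β ∈ ℝ` at the point `β*` given by the two-branch MCP update formula. -/
theorem stmt15 (a lam d u : ℝ) (ha : 1 < a) (hlam : 0 < lam) (hd : 1 ≤ d)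
    (P : ℝ → ℝ)
    (hP : ∀ θ : ℝ, 0 ≤ θ → P θ =
      if θ ≤ a * lam then lam * θ - θ ^ 2 / (2 * a)
      else a * lam ^ 2 / 2)
    (βstar : ℝ)
    (hβstar : βstar =
      if |u| ≤ a * lam * d then Real.sign u * (a * max (|u| - lam) 0 / (a * d - 1))
      else u / d) :
    ∀ β : ℝ, d * βstar ^ 2 - 2 * u * βstar + 2 * P |βstar|
      ≤ d * β ^ 2 - 2 * u * β + 2 * P |β| := by
  intro β
  have hP' (x : ℝ) : P |x| = mcp a lam |x| := hP _ (abs_nonneg x)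
  rw [hP', hP']
  change objective a lam d u βstar ≤ objective a lam d u β
  have hd0 : 0 < d := by linarith
  have had : 1 < a * d := by nlinarith
  have hopt : 0 ≤ u * βstar ∧ objective a lam d |u| |βstar| ≤ objective a lam d |u| |β| := by
    split_ifs at hβstar with hu <;> subst hβstar
    · have hs : 0 ≤ a * max (|u| - lam) 0 / (a * d - 1) := by
        have : 0 < a * d - 1 := by linarith
        positivity
      refine ⟨mul_sign_mul_nonneg hs, ?_⟩
      rw [abs_sign_mul fun hu0 => by simp [hu0, hlam.le], abs_of_nonneg hs]
      exact objective_threshold_le (by linarith) had hlam.le hu (abs_nonneg β)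
    · refine ⟨by rw [← mul_div_assoc]; exact div_nonneg (mul_self_nonneg u) hd0.le, ?_⟩
      rw [abs_div, abs_of_pos hd0]
      exact objective_div_le (by linarith) hd0 had.le hlam.le (not_le.1 hu) (abs_nonneg β)
  calc objective a lam d u βstar = objective a lam d |u| |βstar| :=
        (objective_abs_of_mul_nonneg hopt.1).symm
    _ ≤ objective a lam d |u| |β| := hopt.2
    _ ≤ objective a lam d u β := objective_abs_le
end

section
/- Fix d > 0, λ₁ ≥ 0, λ₂ ≥ 0 and u ∈ ℝ. Then the elastic-net objective h(β) = dβ² − 2uβ + 2λ₁|β| + λ₂β² attains its global minimum over β ∈ ℝ at the unique point β* = sign(u)·((|u| − λ₁)₊/(d + λ₂)). (The case λ₂ = 0 gives the lasso update β* = sign(u)·((|u| − λ₁)₊/d).) -/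
/-- closed-form elastic-net / lasso update.
Fix `d > 0`, `λ₁ ≥ 0`, `λ₂ ≥ 0` and `u ∈ ℝ`.  The elastic-net objective
`h(β) = dβ² − 2uβ + 2λ₁|β| + λ₂β²` attains its global minimum over `β ∈ ℝ`
at the unique point `β* = sign(u)·((|u| − λ₁)₊/(d + λ₂))`. -/
theorem stmt16 (d lam1 lam2 u : ℝ) (hd : 0 < d) (hl1 : 0 ≤ lam1) (hl2 : 0 ≤ lam2)
    (βstar : ℝ)
    (hβstar : βstar = Real.sign u * (max (|u| - lam1) 0 / (d + lam2))) :
    ∀ β : ℝ, β ≠ βstar →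
      d * βstar ^ 2 - 2 * u * βstar + 2 * lam1 * |βstar| + lam2 * βstar ^ 2
        < d * β ^ 2 - 2 * u * β + 2 * lam1 * |β| + lam2 * β ^ 2 := by
  intro β hβ
  have hD : 0 < d + lam2 := by linarith
  rcases le_or_gt |u| lam1 with hle | hgt
  · have hb0 : βstar = 0 := by
      rw [hβstar, max_eq_right (by linarith), zero_div, mul_zero]
    subst hb0
    have hβ0 : β ≠ 0 := hβ
    have h1 : u * β ≤ |u| * |β| := (le_abs_self (u * β)).trans_eq (abs_mul u β)
    have h2 : 0 < |β| := abs_pos.mpr hβ0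
    simp only [abs_zero]
    nlinarith [sq_abs β, mul_pos h2 h2, mul_le_mul_of_nonneg_right hle h2.le,
      mul_nonneg hl2 (sq_nonneg β)]
  · have hu : u ≠ 0 := by
      intro h; rw [h, abs_zero] at hgt; linarith
    have hsq : 0 < (β - βstar) ^ 2 := by
      have h := sub_ne_zero.mpr hβ; positivity
    have hmax : max (|u| - lam1) 0 = |u| - lam1 := max_eq_left (by linarith)
    rcases lt_or_gt_of_ne hu with hneg | hpos
    · have hs : Real.sign u = -1 := Real.sign_of_neg hneg
      have habs : |u| = -u := abs_of_neg hneg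
      have hval : βstar = (u + lam1) / (d + lam2) := by
        rw [hβstar, hs, hmax, habs]; ring
      have hkey : (d + lam2) * βstar = u + lam1 := by
        rw [hval]; field_simp
      have hbneg : βstar ≤ 0 := by
        rw [hval]; apply div_nonpos_of_nonpos_of_nonneg (by linarith) hD.le
      have habsb : |βstar| = -βstar := abs_of_nonpos hbneg
      rw [habsb]
      nlinarith [neg_abs_le β, mul_nonneg hl1 (sub_nonneg.mpr (neg_abs_le β))]
    · have hs : Real.sign u = 1 := Real.sign_of_pos hpos
      have habs : |u| = u := abs_of_pos hpos
      have hval : βstar = (u - lam1) / (d + lam2) := by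
        rw [hβstar, hs, hmax, habs]; ring
      have hkey : (d + lam2) * βstar = u - lam1 := by
        rw [hval]; field_simp
      have hbpos : 0 ≤ βstar := by
        rw [hval]; exact div_nonneg (by linarith) hD.le
      have habsb : |βstar| = βstar := abs_of_nonneg hbpos
      rw [habsb]
      nlinarith [le_abs_self β, mul_nonneg hl1 (sub_nonneg.mpr (le_abs_self β))]
end

section
/- Fix d > 0, λ > 0, u ∈ ℝ and b̂ ∈ ℝ with b̂ ≠ 0. Then the nonnegative garrote objective h(β) = dβ² − 2uβ + 2λβ/b̂, minimized over the constraint set Θ = {β ∈ ℝ : β·b̂ ≥ 0}, attains its minimum at β* = ((u·b̂ − λ)₊/(d·b̂²))·b̂. -/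
/-! Substituting `x = β·b̂` turns the constraint into `x ≥ 0` and, after multiplying by `b̂² > 0`,
the objective into `d x² − 2 (u b̂ − λ) x`. On `x ≥ 0` this quadratic is minimized at
`(u b̂ − λ)₊ / d`, and `β* · b̂` is exactly that point. -/

theorem isMinOn_quadratic_Ici_posPart_div {d : ℝ} (hd : 0 < d) (a : ℝ) :
    IsMinOn (fun x => d * x ^ 2 - 2 * a * x) (Set.Ici 0) (max a 0 / d) := by
  refine isMinOn_iff.2 fun x (hx : 0 ≤ x) => ?_
  have hmin : d * (max a 0 / d) ^ 2 - 2 * a * (max a 0 / d) = -(max a 0) ^ 2 / d := by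
    rcases le_total a 0 with ha | ha
    · simp [max_eq_right ha]
    · rw [max_eq_left ha]; field_simp; ring
  have hsq : 0 ≤ d * (x - max a 0 / d) ^ 2 := by positivity
  have hexpand : d * (x - max a 0 / d) ^ 2 = d * x ^ 2 - 2 * max a 0 * x + (max a 0) ^ 2 / d := by
    field_simp; ring
  have hlin : a * x ≤ max a 0 * x := mul_le_mul_of_nonneg_right (le_max_left a 0) hx
  rw [hmin, neg_div]
  linarith

theorem garrote_objective_mul_sq {b : ℝ} (hb : b ≠ 0) (d lam u β : ℝ) :
    (d * β ^ 2 - 2 * u * β + 2 * lam * β / b) * b ^ 2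
      = d * (β * b) ^ 2 - 2 * (u * b - lam) * (β * b) := by
  field_simp
  ring

theorem stmt17_general (d lam u bhat : ℝ) (hd : 0 < d) (hb : bhat ≠ 0)
    (βstar : ℝ)
    (hβstar : βstar = (max (u * bhat - lam) 0 / (d * bhat ^ 2)) * bhat) :
    0 ≤ βstar * bhat ∧
    ∀ β : ℝ, 0 ≤ β * bhat →
      d * βstar ^ 2 - 2 * u * βstar + 2 * lam * βstar / bhat
        ≤ d * β ^ 2 - 2 * u * β + 2 * lam * β / bhat := by
  have hstar : βstar * bhat = max (u * bhat - lam) 0 / d := by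
    rw [hβstar]
    field_simp
  refine ⟨hstar ▸ by positivity, fun β hβ => ?_⟩
  rw [← mul_le_mul_iff_left₀ (by positivity : 0 < bhat ^ 2),
    garrote_objective_mul_sq hb, garrote_objective_mul_sq hb, hstar]
  exact isMinOn_iff.1 (isMinOn_quadratic_Ici_posPart_div hd _) _ hβ

/-- closed-form nonnegative garrote update.
Fix `d > 0`, `λ > 0`, `u ∈ ℝ` and `b̂ ≠ 0`.  The nonnegative garrote
objective `h(β) = dβ² − 2uβ + 2λβ/b̂`, minimized over
`Θ = {β : β·b̂ ≥ 0}`, attains its minimum at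
`β* = ((u·b̂ − λ)₊/(d·b̂²))·b̂`. -/
theorem stmt17 (d lam u bhat : ℝ) (hd : 0 < d) (hlam : 0 < lam) (hb : bhat ≠ 0)
    (βstar : ℝ)
    (hβstar : βstar = (max (u * bhat - lam) 0 / (d * bhat ^ 2)) * bhat) :
    0 ≤ βstar * bhat ∧
    ∀ β : ℝ, 0 ≤ β * bhat →
      d * βstar ^ 2 - 2 * u * βstar + 2 * lam * βstar / bhat
        ≤ d * β ^ 2 - 2 * u * β + 2 * lam * β / bhat :=
  stmt17_general d lam u bhat hd hb βstar hβstar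
end
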